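/- arXiv:2206.08303 — 9 statements merged into one kernel-verified Lean document; each statement's English description precedes it below -/
import Mathlib

section
/- Let d ∈ ℕ, let 0 < e ≤ Γ be reals, and let β ∈ [0,1]. Let D and H be diagonal real d×d matrices all of whose diagonal entries have absolute value at most Γ, and let D' be a diagonal real d×d matrix with (D'_{ii})² = β·(D_{ii})² + (1−β)·(H_{ii})² for every i. Let D̂ and D̂' be the clippings of D and D', i.e., D̂_{ii} = max(e, |D_{ii}|) and D̂'_{ii} = max(e, |D'_{ii}|). Then D̂' ≼ (1 + (1−β)·Γ²/(2e²))·D̂ in the Loewner order. -/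
/-- The deterministic core of part 2 of Lemma 1: for the squared preconditioner
update (5) followed by clipping, `D̂' ≼ (1 + (1−β)Γ²/(2e²))·D̂` in the Loewner order. -/
theorem clipped_preconditioner_squared_growth
    (d : ℕ) (e Γ β : ℝ) (he : 0 < e) (heΓ : e ≤ Γ)
    (hβ0 : 0 ≤ β) (hβ1 : β ≤ 1)
    (D H D' : Matrix (Fin d) (Fin d) ℝ)
    (hD : D.IsDiag) (hH : H.IsDiag) (hD'diag : D'.IsDiag)
    (hDΓ : ∀ i, |D i i| ≤ Γ) (hHΓ : ∀ i, |H i i| ≤ Γ)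
    (hupd : ∀ i, (D' i i) ^ 2 = β * (D i i) ^ 2 + (1 - β) * (H i i) ^ 2) :
    ((1 + (1 - β) * Γ ^ 2 / (2 * e ^ 2)) •
        Matrix.diagonal (fun i => max e |D i i|) -
      Matrix.diagonal (fun i => max e |D' i i|)).PosSemidef := by
  set c : ℝ := 1 + (1 - β) * Γ ^ 2 / (2 * e ^ 2) with hc
  have hmat : (c • Matrix.diagonal (fun i => max e |D i i|) -
      Matrix.diagonal (fun i => max e |D' i i|)) =
      Matrix.diagonal (fun i => c * max e |D i i| - max e |D' i i|) := by
    rw [← Matrix.diagonal_smul, ← Matrix.diagonal_sub]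
    rfl
  rw [hmat]
  apply Matrix.posSemidef_diagonal_iff.2
  intro i
  have he2 : (0:ℝ) < e ^ 2 := by positivity
  have ht : 0 ≤ (1 - β) * Γ ^ 2 / (2 * e ^ 2) :=
    div_nonneg (mul_nonneg (by linarith) (sq_nonneg Γ)) (by positivity)
  have hc1 : 1 ≤ c := by rw [hc]; linarith
  set m : ℝ := max e |D i i| with hm
  have hem : e ≤ m := le_max_left _ _
  have ham : |D i i| ≤ m := le_max_right _ _
  have hx : 0 ≤ |D' i i| := abs_nonneg _
  have hxsq : |D' i i| ^ 2 = β * (D i i) ^ 2 + (1 - β) * (H i i) ^ 2 := by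
    rw [sq_abs]; exact hupd i
  have hHi : |H i i| ≤ Γ := hHΓ i
  have hHi0 : 0 ≤ |H i i| := abs_nonneg _
  have hDi0 : 0 ≤ |D i i| := abs_nonneg _
  -- bound : |D' i i|^2 ≤ β m^2 + (1-β) Γ^2
  have hub : |D' i i| ^ 2 ≤ β * m ^ 2 + (1 - β) * Γ ^ 2 := by
    rw [hxsq]
    have h1 : (D i i) ^ 2 ≤ m ^ 2 := by
      rw [← sq_abs (D i i)]
      exact pow_le_pow_left₀ hDi0 ham 2
    have h2 : (H i i) ^ 2 ≤ Γ ^ 2 := by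
      rw [← sq_abs (H i i)]
      exact pow_le_pow_left₀ hHi0 hHi 2
    nlinarith
  -- (c*m)^2 ≥ β m^2 + (1-β) Γ^2
  have hcm : |D' i i| ≤ c * m := by
    have hcm2 : β * m ^ 2 + (1 - β) * Γ ^ 2 ≤ (c * m) ^ 2 := by
      have hme : e ^ 2 ≤ m ^ 2 := pow_le_pow_left₀ he.le hem 2
      have hkey : m ^ 2 + (1 - β) * Γ ^ 2 ≤ (c * m) ^ 2 := by
        set t : ℝ := (1 - β) * Γ ^ 2 / (2 * e ^ 2) with htdef
        have ht' : t * (2 * e ^ 2) = (1 - β) * Γ ^ 2 := by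
          rw [htdef]; field_simp
        have hct : c = 1 + t := hc
        rw [hct]
        nlinarith [mul_nonneg ht (sub_nonneg.2 hme), sq_nonneg (t * m)]
      nlinarith
    nlinarith [mul_nonneg (zero_le_one.trans hc1) (he.trans_le hem).le]
  have hecm : e ≤ c * m := le_trans hem (le_mul_of_one_le_left (he.trans_le hem).le hc1)
  have : max e |D' i i| ≤ c * m := max_le hecm hcm
  linarith
end

section
/- Let d ∈ ℕ, let 0 < e ≤ Γ be reals, and let β ∈ [0,1]. Let D and H be diagonal real d×d matrices all of whose diagonal entries have absolute value at most Γ, and let D' = β·D + (1−β)·H. Let D̂ and D̂' be the clippings of D and D', i.e., D̂_{ii} = max(e, |D_{ii}|) and D̂'_{ii} = max(e, |D'_{ii}|). Then D̂' ≼ (1 + 2(1−β)·Γ/e)·D̂ in the Loewner order. -/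
/-- The deterministic core of part 3 of Lemma 1: for the additive preconditioner
update (6) followed by clipping, `D̂' ≼ (1 + 2(1−β)Γ/e)·D̂` in the Loewner order. -/
theorem clipped_preconditioner_additive_growth
    (d : ℕ) (e Γ β : ℝ) (he : 0 < e) (heΓ : e ≤ Γ)
    (hβ0 : 0 ≤ β) (hβ1 : β ≤ 1)
    (D H : Matrix (Fin d) (Fin d) ℝ)
    (hD : D.IsDiag) (hH : H.IsDiag)
    (hDΓ : ∀ i, |D i i| ≤ Γ) (hHΓ : ∀ i, |H i i| ≤ Γ)
    (D' : Matrix (Fin d) (Fin d) ℝ)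
    (hupd : D' = β • D + (1 - β) • H) :
    ((1 + 2 * (1 - β) * Γ / e) •
        Matrix.diagonal (fun i => max e |D i i|) -
      Matrix.diagonal (fun i => max e |D' i i|)).PosSemidef := by
  have key : ((1 + 2 * (1 - β) * Γ / e) •
        Matrix.diagonal (fun i => max e |D i i|) -
      Matrix.diagonal (fun i => max e |D' i i|)) =
      Matrix.diagonal (fun i => (1 + 2 * (1 - β) * Γ / e) * max e |D i i|
        - max e |D' i i|) := by
    rw [← Matrix.diagonal_smul, ← Matrix.diagonal_sub]
    rfl
  rw [key]
  refine Matrix.posSemidef_diagonal_iff.mpr fun i => ?_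
  have h1β : (0:ℝ) ≤ 1 - β := by linarith
  have hΓ0' : (0:ℝ) ≤ Γ := he.le.trans heΓ
  have hc : 0 ≤ 2 * (1 - β) * Γ / e := div_nonneg (by nlinarith) he.le
  set M := max e |D i i| with hM
  have heM : e ≤ M := le_max_left _ _
  have hDM : |D i i| ≤ M := le_max_right _ _
  have hΓ0 : 0 ≤ Γ := he.le.trans heΓ
  have h1 : |D' i i| ≤ M + 2 * (1 - β) * Γ := by
    rw [hupd]
    simp only [Matrix.add_apply, Matrix.smul_apply, smul_eq_mul]
    calc |β * D i i + (1 - β) * H i i| ≤ |β * D i i| + |(1 - β) * H i i| := abs_add_le _ _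
      _ = β * |D i i| + (1 - β) * |H i i| := by
          rw [abs_mul, abs_mul, abs_of_nonneg hβ0, abs_of_nonneg h1β]
      _ ≤ β * M + (1 - β) * Γ := by
          have := hHΓ i
          nlinarith
      _ ≤ M + 2 * (1 - β) * Γ := by nlinarith [heM.trans' he.le, hΓ0]
  have h2 : 2 * (1 - β) * Γ = (2 * (1 - β) * Γ / e) * e := by
    field_simp
  have h3 : max e |D' i i| ≤ M + 2 * (1 - β) * Γ := by
    refine max_le ?_ h1
    linarith [mul_nonneg hc he.le, h2]
  have h4 : (2 * (1 - β) * Γ / e) * e ≤ (2 * (1 - β) * Γ / e) * M :=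
    mul_le_mul_of_nonneg_left heM hc
  nlinarith
end

section
/- For every real x ≥ 1, one has (1 − 1/x)^{√x} ≤ 1 − 1/(2√x), where the left-hand side uses the real power. -/
/-- The technical lemma (14) of the paper: for every real `x ≥ 1`,
`(1 − 1/x)^{√x} ≤ 1 − 1/(2√x)`, with the real power. -/
theorem one_sub_inv_rpow_sqrt_le
    (x : ℝ) (hx : 1 ≤ x) :
    (1 - 1 / x) ^ Real.sqrt x ≤ 1 - 1 / (2 * Real.sqrt x) := by
  set s := Real.sqrt x with hs
  have hx0 : (0:ℝ) < x := lt_of_lt_of_le one_pos hx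
  have hs1 : 1 ≤ s := by
    rw [hs, show (1:ℝ) = Real.sqrt 1 by simp]
    exact Real.sqrt_le_sqrt hx
  have hs0 : (0:ℝ) < s := lt_of_lt_of_le one_pos hs1
  have hsx : s * s = x := Real.mul_self_sqrt hx0.le
  have hb : (0:ℝ) ≤ 1 - 1 / x := by
    have : 1 / x ≤ 1 := by rw [div_le_one hx0]; exact hx
    linarith
  have h1 : (1 - 1 / x : ℝ) ≤ Real.exp (-(1 / x)) := by
    have := Real.add_one_le_exp (-(1 / x)); linarith
  have h2 : (1 - 1 / x) ^ s ≤ Real.exp (-(1 / x)) ^ s :=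
    Real.rpow_le_rpow hb h1 hs0.le
  have h3 : Real.exp (-(1 / x)) ^ s = Real.exp (-(1 / s)) := by
    rw [← Real.exp_mul]
    congr 1
    field_simp
    nlinarith [hsx]
  have he : 1 + 1 / s ≤ Real.exp (1 / s) := by
    have := Real.add_one_le_exp (1 / s); linarith
  have hpos : (0:ℝ) < 1 + 1 / s := by positivity
  have h4 : Real.exp (-(1 / s)) ≤ (1 + 1 / s)⁻¹ := by
    rw [Real.exp_neg]
    exact inv_anti₀ hpos he
  have e1 : ((1 + 1 / s)⁻¹ : ℝ) = s / (s + 1) := by field_simp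
  have e2 : 1 - 1 / (2 * s) = (2 * s - 1) / (2 * s) := by field_simp
  have hfin : ((1 + 1 / s)⁻¹ : ℝ) ≤ 1 - 1 / (2 * s) := by
    rw [e1, e2, div_le_div_iff₀ (by positivity) (by positivity)]
    nlinarith [hs1]
  calc (1 - 1 / x) ^ s ≤ Real.exp (-(1 / s)) := h3 ▸ h2
    _ ≤ (1 + 1 / s)⁻¹ := h4
    _ ≤ 1 - 1 / (2 * s) := hfin
end

section
/- Let α ≥ 1 be a real number and set β = 1 − 1/α. Then for every natural number t with t ≥ √α, one has (1 − β)/(1 − β^{t+1}) ≤ 2/√α. -/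
/-- The tail bound for the Adam/AdaHessian momentum schedule used in Corollaries 2
and 4: if `β = 1 − 1/α` with `α ≥ 1`, then for every natural `t ≥ √α`,
`(1 − β)/(1 − β^{t+1}) ≤ 2/√α`. -/
theorem adam_momentum_tail_bound
    (α : ℝ) (hα : 1 ≤ α) (β : ℝ) (hβ : β = 1 - 1 / α)
    (t : ℕ) (ht : Real.sqrt α ≤ (t : ℝ)) :
    (1 - β) / (1 - β ^ (t + 1)) ≤ 2 / Real.sqrt α := by
  set s := Real.sqrt α with hs
  have hα0 : (0:ℝ) < α := lt_of_lt_of_le one_pos hα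
  have hs1 : (1:ℝ) ≤ s := by
    rw [hs, show (1:ℝ) = Real.sqrt 1 by simp]
    exact Real.sqrt_le_sqrt hα
  have hs2 : s ^ 2 = α := Real.sq_sqrt hα0.le
  have hinv : 1 / α ≤ 1 := by
    rw [div_le_one hα0]; exact hα
  have hβ0 : 0 ≤ β := by rw [hβ]; linarith
  have hβ1 : β < 1 := by
    rw [hβ]; have : 0 < 1 / α := by positivity
    linarith
  -- Bernoulli-type bound
  have hkey : β ^ (t + 1) * (1 + (t + 1) / α) ≤ 1 := by
    have hb : (1:ℝ) + (t + 1) * (1 / α) ≤ (1 + 1 / α) ^ (t + 1) := by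
      have h01 : (0:ℝ) < 1/α := by positivity
      have := one_add_mul_le_pow (a := 1/α) (by linarith : (-2:ℝ) ≤ 1/α) (t + 1)
      simpa using this
    have hmul : β ^ (t + 1) * (1 + 1 / α) ^ (t + 1) ≤ 1 := by
      rw [← mul_pow]
      have h1 : β * (1 + 1 / α) = 1 - (1/α)^2 := by rw [hβ]; ring
      have h0 : 0 ≤ β * (1 + 1 / α) := by positivity
      have h2 : β * (1 + 1 / α) ≤ 1 := by
        rw [h1]; nlinarith [sq_nonneg (1/α)]
      calc (β * (1 + 1 / α)) ^ (t + 1) ≤ 1 ^ (t + 1) := pow_le_pow_left₀ h0 h2 _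
        _ = 1 := one_pow _
    calc β ^ (t + 1) * (1 + (t + 1) / α)
        = β ^ (t + 1) * (1 + (t + 1) * (1 / α)) := by ring
      _ ≤ β ^ (t + 1) * (1 + 1 / α) ^ (t + 1) := by
          exact mul_le_mul_of_nonneg_left hb (pow_nonneg hβ0 _)
      _ ≤ 1 := hmul
  have hD : (t + 1 : ℝ) / (α + t + 1) ≤ 1 - β ^ (t + 1) := by
    have hpos : (0:ℝ) < α + t + 1 := by positivity
    rw [div_le_iff₀ hpos]
    have hA : (0:ℝ) < 1 + (t + 1) / α := by positivity
    have hp : β ^ (t + 1) ≤ 1 / (1 + (t + 1) / α) := by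
      rw [le_div_iff₀ hA]; exact hkey
    have heq : (1:ℝ) / (1 + (t + 1) / α) = α / (α + t + 1) := by
      rw [div_eq_div_iff hA.ne' hpos.ne']; field_simp; ring
    have hp' : β ^ (t + 1) ≤ α / (α + t + 1) := heq ▸ hp
    rw [le_div_iff₀ hpos] at hp'
    linarith
  have hDpos : 0 < 1 - β ^ (t + 1) := by
    have : β ^ (t + 1) < 1 := pow_lt_one₀ hβ0 hβ1 (Nat.succ_ne_zero t)
    linarith
  have hspos : 0 < s := lt_of_lt_of_le one_pos hs1
  rw [div_le_div_iff₀ hDpos hspos]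
  have h1β : 1 - β = 1 / α := by rw [hβ]; ring
  rw [h1β]
  have ht1 : s + 1 ≤ (t:ℝ) + 1 := by linarith
  have hstep : (1:ℝ) / α * s ≤ 2 * ((t + 1 : ℝ) / (α + t + 1)) := by
    have hpos : (0:ℝ) < α + t + 1 := by positivity
    rw [div_mul_eq_mul_div, ← mul_div_assoc, div_le_div_iff₀ hα0 hpos]
    nlinarith [sq_nonneg s, mul_le_mul_of_nonneg_left ht1 (by nlinarith : (0:ℝ) ≤ 2*s^2 - s)]
  calc 1 / α * s ≤ 2 * ((t + 1 : ℝ) / (α + t + 1)) := hstep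
    _ ≤ 2 * (1 - β ^ (t + 1)) := by linarith
end

section
/- Let T ≥ 1 be a natural number and set β = 1 − 1/T. Then Σ_{t=1}^{T} (1 − β)/(1 − β^{t+1}) ≤ 3√T. -/
lemma aux_pow_le_inv_one_add (x : ℝ) (hx0 : 0 ≤ x) (hx1 : x ≤ 1) (n : ℕ) :
    (1 - x) ^ n ≤ 1 / (1 + n * x) := by
  have h1 : (0:ℝ) < 1 + n * x := by positivity
  rw [le_div_iff₀ h1]
  have hnn : (0:ℝ) ≤ (1 - x) ^ n := pow_nonneg (by linarith) n
  calc (1 - x) ^ n * (1 + n * x) ≤ (1 - x) ^ n * (1 + x) ^ n := by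
        have := one_add_mul_le_pow (by linarith : (-2:ℝ) ≤ x) n
        nlinarith
    _ = ((1 - x) * (1 + x)) ^ n := by rw [mul_pow]
    _ ≤ 1 := pow_le_one₀ (by nlinarith) (by nlinarith)

lemma aux_key (x : ℝ) (hx0 : 0 < x) (hx1 : x ≤ 1) (n : ℕ) (hn : 1 ≤ n) :
    x / (1 - (1 - x) ^ n) ≤ 1 / n + x := by
  have hn' : (1:ℝ) ≤ n := by exact_mod_cast hn
  have hp := aux_pow_le_inv_one_add x hx0.le hx1 n
  have hnx : (0:ℝ) < n * x := by positivity
  have h1 : (0:ℝ) < 1 + n * x := by positivity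
  have heq : 1 - 1 / (1 + n * x) = n * x / (1 + n * x) := by field_simp; ring
  have hden : n * x / (1 + n * x) ≤ 1 - (1 - x) ^ n := by linarith
  have hden0 : (0:ℝ) < n * x / (1 + n * x) := by positivity
  calc x / (1 - (1 - x) ^ n) ≤ x / (n * x / (1 + n * x)) := by
        gcongr
    _ = 1 / n + x := by
        field_simp

lemma aux_sqrt_step (t : ℕ) :
    (1:ℝ) / (t + 1) ≤ 2 * (Real.sqrt (t + 1) - Real.sqrt t) := by
  set a := Real.sqrt (t:ℝ) with ha
  set b := Real.sqrt ((t:ℝ) + 1) with hb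
  have ht0 : (0:ℝ) ≤ t := Nat.cast_nonneg t
  have ha0 : 0 ≤ a := Real.sqrt_nonneg _
  have hb1 : 1 ≤ b := Real.one_le_sqrt.mpr (by linarith)
  have hab : a ≤ (t:ℝ) + 1 := by
    rw [ha]
    exact Real.sqrt_le_iff.mpr ⟨by linarith, by nlinarith⟩
  have hbb : b ≤ (t:ℝ) + 1 := by
    rw [hb]
    exact Real.sqrt_le_iff.mpr ⟨by linarith, by nlinarith⟩
  have hsq : b ^ 2 - a ^ 2 = 1 := by
    rw [ha, hb, Real.sq_sqrt (by positivity), Real.sq_sqrt ht0]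
    ring
  have hsum : 0 < a + b := by linarith
  have key : (b - a) * (a + b) = 1 := by nlinarith
  have ht1 : (0:ℝ) < (t:ℝ) + 1 := by positivity
  rw [div_le_iff₀ ht1]
  nlinarith

/-- The summed momentum bound from Corollaries 2 and 4: with `β = 1 − 1/T`,
`Σ_{t=1}^{T} (1 − β)/(1 − β^{t+1}) ≤ 3√T`. -/
theorem adam_momentum_sum_bound
    (T : ℕ) (hT : 1 ≤ T) (β : ℝ) (hβ : β = 1 - 1 / (T : ℝ)) :
    ∑ t ∈ Finset.Icc 1 T, (1 - β) / (1 - β ^ (t + 1)) ≤ 3 * Real.sqrt T := by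
  have hT0 : (0:ℝ) < T := by exact_mod_cast hT
  have hx0 : (0:ℝ) < 1 / T := by positivity
  have hx1 : (1:ℝ) / T ≤ 1 := by
    rw [div_le_one hT0]; exact_mod_cast hT
  have hterm : ∀ t ∈ Finset.Icc 1 T,
      (1 - β) / (1 - β ^ (t + 1)) ≤ 2 * (Real.sqrt (t + 1) - Real.sqrt t) + 1 / T := by
    intro t ht
    have h1 : (1 - β) / (1 - β ^ (t+1)) ≤ 1 / (t+1) + 1 / T := by
      have := aux_key (1/(T:ℝ)) hx0 hx1 (t+1) (by omega)
      rw [hβ]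
      simp only [sub_sub_cancel] at this ⊢
      convert this using 3
      push_cast
      ring
    have h2 : (1:ℝ) / (t+1) ≤ 2 * (Real.sqrt (t + 1) - Real.sqrt t) := aux_sqrt_step t
    push_cast at h1 ⊢
    linarith
  have hsum := Finset.sum_le_sum hterm
  have htel : ∑ t ∈ Finset.Icc 1 T, (2 * (Real.sqrt (t + 1) - Real.sqrt t) + 1 / (T:ℝ))
      = 2 * (Real.sqrt (T + 1) - 1) + 1 := by
    rw [Finset.sum_add_distrib, Finset.sum_const, Nat.card_Icc]
    have htel2 : ∑ t ∈ Finset.Icc 1 T, (Real.sqrt (t + 1) - Real.sqrt t)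
        = Real.sqrt (T + 1) - 1 := by
      rw [← Finset.Ico_add_one_right_eq_Icc, Finset.sum_Ico_eq_sum_range]
      have h := Finset.sum_range_sub (fun i => Real.sqrt (i + 1)) T
      rw [show Real.sqrt ((0:ℕ) + 1) = 1 by norm_num] at h
      rw [show T + 1 - 1 = T from rfl, ← h]
      exact Finset.sum_congr rfl (fun i _ => by push_cast; ring_nf)
    rw [← Finset.mul_sum, htel2, Nat.add_sub_cancel, nsmul_eq_mul]
    field_simp
  rw [htel] at hsum
  have hsqT : 1 ≤ Real.sqrt T := Real.one_le_sqrt.mpr (by exact_mod_cast hT)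
  have hsqT1 : Real.sqrt ((T:ℝ) + 1) ≤ Real.sqrt T + 1 := by
    apply Real.sqrt_le_iff.mpr
    constructor
    · positivity
    · have := Real.sq_sqrt hT0.le
      nlinarith [Real.sqrt_nonneg (T:ℝ)]
  linarith
end

section
/- Let F : ℝ^d → ℝ^d be L-Lipschitz, let e > 0, let V̂ be a symmetric positive definite real d×d matrix with e·I ≼ V̂, and let γ > 0. Given z_t ∈ ℝ^d, define z_{t+1/2} = z_t − γ·V̂⁻¹F(z_t) and z_{t+1} = z_t − γ·V̂⁻¹F(z_{t+1/2}). Then for every z ∈ ℝ^d: ‖z_{t+1} − z‖²_{V̂} ≤ ‖z_t − z‖²_{V̂} − 2γ·⟨F(z_{t+1/2}), z_{t+1/2} − z⟩ − (1 − γ²L²/e²)·‖z_{t+1/2} − z_t‖²_{V̂}. -/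
/-!
For a symmetric `S`, expanding the quadratic form `‖x‖²_S = ⟪x, S x⟫` gives the exact identity
`‖c - z‖²_S = ‖a - z‖²_S + 2⟪S (c - a), b - z⟫ + ‖c - b‖²_S - ‖b - a‖²_S`, and for the
extragradient step `S (c - a) = -γ F b` the middle term is `-2γ⟪F b, b - z⟫`. The error term
`‖c - b‖²_S` is small: `S (c - b) = γ (F a - F b)` is controlled by the Lipschitz bound, and
`e • 1 ≤ S` gives both `e ‖x‖² ≤ ‖x‖²_S` and `e ‖x‖²_S ≤ ‖S x‖²`.
-/

open RealInnerProductSpace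

namespace LinearMap

variable {E : Type*} [NormedAddCommGroup E] [InnerProductSpace ℝ E]

theorem IsSymmetric.inner_map_sub_self_eq {S : E →ₗ[ℝ] E} (hS : S.IsSymmetric) (a b c z : E) :
    ⟪c - z, S (c - z)⟫ = ⟪a - z, S (a - z)⟫ + 2 * ⟪S (c - a), b - z⟫
      + ⟪c - b, S (c - b)⟫ - ⟪b - a, S (b - a)⟫ := by
  rw [show c - z = (a - z) + (b - a) + (c - b) by abel, show c - a = (b - a) + (c - b) by abel,
    show b - z = (a - z) + (b - a) by abel]
  generalize a - z = u, b - a = p, c - b = q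
  have hS' : ∀ x y, ⟪x, S y⟫ = ⟪y, S x⟫ := fun x y ↦ by rw [← hS, real_inner_comm]
  simp only [map_add, inner_add_left, inner_add_right]
  rw [hS p u, hS q u, hS p p, hS q p, hS' u p, hS' u q, hS' p q]
  ring

theorem isSymmetric_of_smul_one_le {S : E →ₗ[ℝ] E} {e : ℝ} (h : e • 1 ≤ S) : S.IsSymmetric := by
  simpa using h.isSymmetric.add (isPositive_one.isSymmetric.smul (conj_trivial e))

theorem mul_norm_sq_le_inner_map_self {S : E →ₗ[ℝ] E} {e : ℝ} (h : e • 1 ≤ S) (x : E) :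
    e * ‖x‖ ^ 2 ≤ ⟪x, S x⟫ := by
  have := h.inner_nonneg_right x
  simp only [sub_apply, smul_apply, Module.End.one_apply, inner_sub_right, real_inner_smul_right,
    real_inner_self_eq_norm_sq] at this
  linarith

theorem mul_inner_map_self_le_norm_map_sq {S : E →ₗ[ℝ] E} {e : ℝ} (he : 0 ≤ e) (h : e • 1 ≤ S)
    (x : E) : e * ⟪x, S x⟫ ≤ ‖S x‖ ^ 2 := by
  have hlow := mul_norm_sq_le_inner_map_self h x
  have hcs := real_inner_le_norm x (S x)
  nlinarith [sq_nonneg (‖S x‖ - e * ‖x‖), norm_nonneg x, norm_nonneg (S x),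
    mul_le_mul_of_nonneg_left hcs he]

end LinearMap

section Extragradient

variable {E : Type*} [NormedAddCommGroup E] [InnerProductSpace ℝ E]
  {S : E →ₗ[ℝ] E} {F : E → E} {e L γ : ℝ} {a b c : E}

theorem extragradient_correction_le (he : 0 < e) (hS : e • 1 ≤ S)
    (hF : ∀ z₁ z₂, ‖F z₁ - F z₂‖ ≤ L * ‖z₁ - z₂‖)
    (hb : S (b - a) = -(γ • F a)) (hc : S (c - a) = -(γ • F b)) :
    ⟪c - b, S (c - b)⟫ ≤ γ ^ 2 * L ^ 2 / e ^ 2 * ⟪b - a, S (b - a)⟫ := by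
  have hcb : S (c - b) = γ • (F a - F b) := by
    rw [show c - b = (c - a) - (b - a) by abel, map_sub, hb, hc, smul_sub]
    abel
  have hcorr : e * ⟪c - b, S (c - b)⟫ ≤ γ ^ 2 * ‖F a - F b‖ ^ 2 := by
    simpa only [hcb, norm_smul, mul_pow, Real.norm_eq_abs, sq_abs]
      using LinearMap.mul_inner_map_self_le_norm_map_sq he.le hS (c - b)
  have hlip : ‖F a - F b‖ ^ 2 ≤ L ^ 2 * ‖b - a‖ ^ 2 := by
    rw [← mul_pow, norm_sub_rev b a]
    exact pow_le_pow_left₀ (norm_nonneg _) (hF a b) 2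
  have hcoer := LinearMap.mul_norm_sq_le_inner_map_self hS (b - a)
  rw [div_mul_eq_mul_div, le_div_iff₀ (by positivity)]
  calc ⟪c - b, S (c - b)⟫ * e ^ 2 = e * (e * ⟪c - b, S (c - b)⟫) := by ring
    _ ≤ e * (γ ^ 2 * (L ^ 2 * ‖b - a‖ ^ 2)) :=
      mul_le_mul_of_nonneg_left (hcorr.trans (by gcongr)) he.le
    _ = γ ^ 2 * L ^ 2 * (e * ‖b - a‖ ^ 2) := by ring
    _ ≤ γ ^ 2 * L ^ 2 * ⟪b - a, S (b - a)⟫ := by gcongr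

theorem extragradient_descent (he : 0 < e) (hS : e • 1 ≤ S)
    (hF : ∀ z₁ z₂, ‖F z₁ - F z₂‖ ≤ L * ‖z₁ - z₂‖)
    (hb : S (b - a) = -(γ • F a)) (hc : S (c - a) = -(γ • F b)) (z : E) :
    ⟪c - z, S (c - z)⟫ ≤ ⟪a - z, S (a - z)⟫ - 2 * γ * ⟪F b, b - z⟫
      - (1 - γ ^ 2 * L ^ 2 / e ^ 2) * ⟪b - a, S (b - a)⟫ := by
  rw [(LinearMap.isSymmetric_of_smul_one_le hS).inner_map_sub_self_eq a b c z, hc,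
    inner_neg_left, real_inner_smul_left]
  linarith [extragradient_correction_le he hS hF hb hc]

end Extragradient

theorem scaled_extragradient_descent_general
    (d : ℕ) (L : ℝ)
    (F : EuclideanSpace ℝ (Fin d) → EuclideanSpace ℝ (Fin d))
    (hFlip : ∀ z₁ z₂, ‖F z₁ - F z₂‖ ≤ L * ‖z₁ - z₂‖)
    (e : ℝ) (he : 0 < e)
    (V : Matrix (Fin d) (Fin d) ℝ)
    (hVpd : V.PosDef)
    (hVe : (V - e • (1 : Matrix (Fin d) (Fin d) ℝ)).PosSemidef)
    (γ : ℝ)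
    (zt zth zt1 : EuclideanSpace ℝ (Fin d))
    (hzth : zth = zt - γ • (Matrix.toEuclideanLin V⁻¹) (F zt))
    (hzt1 : zt1 = zt - γ • (Matrix.toEuclideanLin V⁻¹) (F zth)) :
    ∀ z : EuclideanSpace ℝ (Fin d),
      ⟪zt1 - z, (Matrix.toEuclideanLin V) (zt1 - z)⟫ ≤
        ⟪zt - z, (Matrix.toEuclideanLin V) (zt - z)⟫ -
          2 * γ * ⟪F zth, zth - z⟫ -
          (1 - γ ^ 2 * L ^ 2 / e ^ 2) *
            ⟪zth - zt, (Matrix.toEuclideanLin V) (zth - zt)⟫ := by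
  have hV : e • 1 ≤ Matrix.toEuclideanLin V := by
    simpa [LinearMap.le_def, Matrix.toLpLin_one, Module.End.one_eq_id]
      using Matrix.isPositive_toEuclideanLin_iff.mpr hVe
  have hVinv (x) : Matrix.toEuclideanLin V (Matrix.toEuclideanLin V⁻¹ x) = x := by
    rw [← LinearMap.comp_apply, ← Matrix.toLpLin_mul,
      Matrix.mul_nonsing_inv _ ((Matrix.isUnit_iff_isUnit_det V).mp hVpd.isUnit),
      Matrix.toLpLin_one, LinearMap.id_apply]
  refine extragradient_descent he hV hFlip ?_ ?_
  · rw [hzth, sub_sub_cancel_left, map_neg, map_smul, hVinv]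
  · rw [hzt1, sub_sub_cancel_left, map_neg, map_smul, hVinv]

/-- The one-iteration descent inequality for the Scaled Extra Gradient method
(deterministic form of inequality (t1) in the proof of Theorem 1):
`‖z_{t+1} − z‖²_{V̂} ≤ ‖z_t − z‖²_{V̂} − 2γ⟨F(z_{t+1/2}), z_{t+1/2} − z⟩
  − (1 − γ²L²/e²)‖z_{t+1/2} − z_t‖²_{V̂}`. -/
theorem scaled_extragradient_descent
    (d : ℕ) (L : ℝ)
    (F : EuclideanSpace ℝ (Fin d) → EuclideanSpace ℝ (Fin d))
    (hFlip : ∀ z₁ z₂, ‖F z₁ - F z₂‖ ≤ L * ‖z₁ - z₂‖)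
    (e : ℝ) (he : 0 < e)
    (V : Matrix (Fin d) (Fin d) ℝ)
    (hVsymm : V.IsHermitian) (hVpd : V.PosDef)
    (hVe : (V - e • (1 : Matrix (Fin d) (Fin d) ℝ)).PosSemidef)
    (γ : ℝ) (hγ : 0 < γ)
    (zt zth zt1 : EuclideanSpace ℝ (Fin d))
    (hzth : zth = zt - γ • (Matrix.toEuclideanLin V⁻¹) (F zt))
    (hzt1 : zt1 = zt - γ • (Matrix.toEuclideanLin V⁻¹) (F zth)) :
    ∀ z : EuclideanSpace ℝ (Fin d),
      ⟪zt1 - z, (Matrix.toEuclideanLin V) (zt1 - z)⟫ ≤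
        ⟪zt - z, (Matrix.toEuclideanLin V) (zt - z)⟫ -
          2 * γ * ⟪F zth, zth - z⟫ -
          (1 - γ ^ 2 * L ^ 2 / e ^ 2) *
            ⟪zth - zt, (Matrix.toEuclideanLin V) (zth - zt)⟫ :=
  scaled_extragradient_descent_general d L F hFlip e he V hVpd hVe γ zt zth zt1 hzth hzt1
end

section
/- Let 0 < μ ≤ L, let F : ℝ^d → ℝ^d be μ-strongly monotone and L-Lipschitz, and let z* ∈ ℝ^d satisfy F(z*) = 0. Let 0 < e ≤ Γ and 0 < γ ≤ e/(4L). Let V̂ and V̂' be symmetric positive definite d×d matrices with e·I ≼ V̂ ≼ Γ·I, and suppose V̂' ≼ (1 + δ)·V̂ for some δ ≥ 0. Given z_t ∈ ℝ^d, define z_{t+1/2} = z_t − γ·V̂⁻¹F(z_t) and z_{t+1} = z_t − γ·V̂⁻¹F(z_{t+1/2}). Then ‖z_{t+1} − z*‖²_{V̂'} ≤ (1 − γμ/Γ)·(1 + δ)·‖z_t − z*‖²_{V̂}. -/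
/-!
Write `r = z_t - z*`, `w = z_{t+1/2} - z*`, `g₁ = F z_t`, `g₂ = F z_{t+1/2}`, and `‖·‖_{V̂⁻¹}` for
the dual norm. Expanding the `V̂`-norm gives the extragradient identity
`‖z_{t+1} - z*‖²_{V̂} = ‖r‖²_{V̂} - 2γ⟪g₂, w⟫ + γ²(‖g₂ - g₁‖²_{V̂⁻¹} - ‖g₁‖²_{V̂⁻¹})`.
The step size `γ ≤ e/(4L)` keeps the extrapolation step short, so the bracket is nonpositive and
`‖w‖ ≥ ¾‖r‖`; strong monotonicity then gives `2⟪g₂, w⟫ ≥ μ‖r‖²`. Hence the `V̂`-distance drops by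
`γμ‖r‖² ≥ (γμ/Γ)‖r‖²_{V̂}`, and `V̂' ≼ (1 + δ)V̂` costs the factor `1 + δ`.
-/

open RealInnerProductSpace

section RightInverse

variable {E : Type*} [NormedAddCommGroup E] [InnerProductSpace ℝ E] {A B : E →ₗ[ℝ] E} {e : ℝ}

theorem LinearMap.IsSymmetric.of_rightInverse (hA : A.IsSymmetric)
    (hAB : Function.RightInverse B A) : B.IsSymmetric := fun u v =>
  calc ⟪B u, v⟫ = ⟪B u, A (B v)⟫ := by rw [hAB v]
    _ = ⟪A (B u), B v⟫ := (hA _ _).symm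
    _ = ⟪u, B v⟫ := by rw [hAB u]

theorem mul_norm_sq_le_inner_of_rightInverse (hAe : ∀ x, e * ‖x‖ ^ 2 ≤ ⟪x, A x⟫)
    (hAB : Function.RightInverse B A) (u : E) : e * ‖B u‖ ^ 2 ≤ ⟪u, B u⟫ := by
  simpa only [hAB u, real_inner_comm u] using hAe (B u)

theorem mul_norm_le_norm_of_rightInverse (hAe : ∀ x, e * ‖x‖ ^ 2 ≤ ⟪x, A x⟫)
    (hAB : Function.RightInverse B A) (u : E) : e * ‖B u‖ ≤ ‖u‖ := by
  rcases (norm_nonneg (B u)).eq_or_lt with h | h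
  · simp [← h]
  · have := (mul_norm_sq_le_inner_of_rightInverse hAe hAB u).trans (real_inner_le_norm u (B u))
    nlinarith

theorem mul_inner_le_norm_sq_of_rightInverse (he : 0 ≤ e)
    (hAe : ∀ x, e * ‖x‖ ^ 2 ≤ ⟪x, A x⟫) (hAB : Function.RightInverse B A) (u : E) :
    e * ⟪u, B u⟫ ≤ ‖u‖ ^ 2 :=
  calc e * ⟪u, B u⟫ ≤ ‖u‖ * (e * ‖B u‖) := by
        nlinarith [real_inner_le_norm u (B u)]
    _ ≤ ‖u‖ * ‖u‖ := by gcongr; exact mul_norm_le_norm_of_rightInverse hAe hAB u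
    _ = ‖u‖ ^ 2 := (sq _).symm

theorem inner_apply_le_inner_apply_of_norm_le (he : 0 < e)
    (hAe : ∀ x, e * ‖x‖ ^ 2 ≤ ⟪x, A x⟫) (hAB : Function.RightInverse B A) {u v : E}
    (h : ‖v‖ ≤ e * ‖B u‖) : ⟪v, B v⟫ ≤ ⟪u, B u⟫ := by
  have hv := mul_inner_le_norm_sq_of_rightInverse he.le hAe hAB v
  have hu := mul_norm_sq_le_inner_of_rightInverse hAe hAB u
  have hsq : ‖v‖ ^ 2 ≤ (e * ‖B u‖) ^ 2 := by gcongr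
  nlinarith

end RightInverse

theorem norm_sq_le_two_mul_norm_sub_sq {G : Type*} [SeminormedAddCommGroup G] {r u : G}
    (h : ‖u‖ ≤ ‖r‖ / 4) : ‖r‖ ^ 2 ≤ 2 * ‖r - u‖ ^ 2 := by
  have : 3 / 4 * ‖r‖ ≤ ‖r - u‖ := by linarith [norm_sub_norm_le r u]
  nlinarith [norm_nonneg r]

section Extragradient

variable {E : Type*} [NormedAddCommGroup E] [InnerProductSpace ℝ E] {A B : E →ₗ[ℝ] E}
  {F : E → E} {e Γ μ L γ : ℝ} {zstar z zh z₁ : E}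

theorem extragradient_energy_identity (hA : A.IsSymmetric) (hAB : Function.RightInverse B A)
    (γ : ℝ) (r g₁ g₂ : E) :
    ⟪r - γ • B g₂, A (r - γ • B g₂)⟫ = ⟪r, A r⟫ - 2 * γ * ⟪g₂, r - γ • B g₁⟫
      + γ ^ 2 * (⟪g₂ - g₁, B (g₂ - g₁)⟫ - ⟪g₁, B g₁⟫) := by
  have hB := hA.of_rightInverse hAB
  have h₁ : ⟪B g₂, A r⟫ = ⟪g₂, r⟫ := by rw [← hA, hAB g₂]
  have h₂ : ⟪g₁, B g₂⟫ = ⟪g₂, B g₁⟫ := by rw [← hB, real_inner_comm]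
  simp only [map_sub, map_smul, hAB g₂, inner_sub_left, inner_sub_right, real_inner_smul_left,
    real_inner_smul_right, h₁, h₂, real_inner_comm (B g₂) g₂, real_inner_comm r g₂]
  ring

theorem extragradient_decrease (hA : A.IsSymmetric) (hAB : Function.RightInverse B A)
    (he : 0 < e) (hAe : ∀ x, e * ‖x‖ ^ 2 ≤ ⟪x, A x⟫) (hμ : 0 ≤ μ)
    (hFmono : ∀ z₁ z₂, μ * ‖z₁ - z₂‖ ^ 2 ≤ ⟪F z₁ - F z₂, z₁ - z₂⟫)
    (hFlip : ∀ z₁ z₂, ‖F z₁ - F z₂‖ ≤ L * ‖z₁ - z₂‖) (hzstar : F zstar = 0)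
    (hγ : 0 ≤ γ) (hγL : γ * L ≤ e / 4)
    (hzh : zh = z - γ • B (F z)) (hz₁ : z₁ = z - γ • B (F zh)) :
    ⟪z₁ - zstar, A (z₁ - zstar)⟫ ≤ ⟪z - zstar, A (z - zstar)⟫ - γ * μ * ‖z - zstar‖ ^ 2 := by
  have hw : zh - zstar = (z - zstar) - γ • B (F z) := by rw [hzh, sub_right_comm]
  have hstep : ‖F zh - F z‖ ≤ e * ‖B (F z)‖ :=
    calc ‖F zh - F z‖ ≤ L * ‖zh - z‖ := hFlip zh z
      _ = γ * L * ‖B (F z)‖ := by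
        rw [hzh, sub_sub_cancel_left, norm_neg, norm_smul, Real.norm_of_nonneg hγ]; ring
      _ ≤ e * ‖B (F z)‖ := by gcongr; linarith
  have hshort : ‖γ • B (F z)‖ ≤ ‖z - zstar‖ / 4 := by
    have hFz : ‖F z‖ ≤ L * ‖z - zstar‖ := by simpa only [hzstar, sub_zero] using hFlip z zstar
    have := mul_norm_le_norm_of_rightInverse hAe hAB (F z)
    rw [norm_smul, Real.norm_of_nonneg hγ, le_div_iff₀' (by norm_num : (0 : ℝ) < 4)]
    refine le_of_mul_le_mul_left ?_ he
    calc e * (4 * (γ * ‖B (F z)‖)) = 4 * γ * (e * ‖B (F z)‖) := by ring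
      _ ≤ 4 * γ * (L * ‖z - zstar‖) := mul_le_mul_of_nonneg_left (this.trans hFz) (by positivity)
      _ = 4 * (γ * L) * ‖z - zstar‖ := by ring
      _ ≤ e * ‖z - zstar‖ := mul_le_mul_of_nonneg_right (by linarith) (norm_nonneg _)
  have hmono : μ * ‖zh - zstar‖ ^ 2 ≤ ⟪F zh, zh - zstar⟫ := by
    simpa only [hzstar, sub_zero] using hFmono zh zstar
  have hbracket := inner_apply_le_inner_apply_of_norm_le he hAe hAB hstep
  have hclose : ‖z - zstar‖ ^ 2 ≤ 2 * ‖zh - zstar‖ ^ 2 :=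
    hw ▸ norm_sq_le_two_mul_norm_sub_sq hshort
  rw [hz₁, sub_right_comm, extragradient_energy_identity hA hAB γ _ (F z), ← hw]
  have hbracket' : γ ^ 2 * (⟪F zh - F z, B (F zh - F z)⟫ - ⟪F z, B (F z)⟫) ≤ 0 :=
    mul_nonpos_of_nonneg_of_nonpos (sq_nonneg γ) (sub_nonpos.mpr hbracket)
  linarith [mul_le_mul_of_nonneg_left hmono hγ, mul_le_mul_of_nonneg_left hclose (mul_nonneg hγ hμ)]

theorem extragradient_contraction (hA : A.IsSymmetric) (hAB : Function.RightInverse B A)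
    (he : 0 < e) (hAe : ∀ x, e * ‖x‖ ^ 2 ≤ ⟪x, A x⟫) (hΓ : 0 < Γ)
    (hAΓ : ∀ x, ⟪x, A x⟫ ≤ Γ * ‖x‖ ^ 2) (hμ : 0 ≤ μ)
    (hFmono : ∀ z₁ z₂, μ * ‖z₁ - z₂‖ ^ 2 ≤ ⟪F z₁ - F z₂, z₁ - z₂⟫)
    (hFlip : ∀ z₁ z₂, ‖F z₁ - F z₂‖ ≤ L * ‖z₁ - z₂‖) (hzstar : F zstar = 0)
    (hγ : 0 ≤ γ) (hγL : γ * L ≤ e / 4)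
    (hzh : zh = z - γ • B (F z)) (hz₁ : z₁ = z - γ • B (F zh)) :
    ⟪z₁ - zstar, A (z₁ - zstar)⟫ ≤ (1 - γ * μ / Γ) * ⟪z - zstar, A (z - zstar)⟫ := by
  have hdecr := extragradient_decrease hA hAB he hAe hμ hFmono hFlip hzstar hγ hγL hzh hz₁
  have hupper : γ * μ / Γ * ⟪z - zstar, A (z - zstar)⟫ ≤ γ * μ * ‖z - zstar‖ ^ 2 :=
    calc γ * μ / Γ * ⟪z - zstar, A (z - zstar)⟫ ≤ γ * μ / Γ * (Γ * ‖z - zstar‖ ^ 2) := by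
          gcongr; exact hAΓ _
      _ = γ * μ * ‖z - zstar‖ ^ 2 := by field_simp
  linarith

end Extragradient

namespace Matrix

theorem inner_toEuclideanLin_le_of_posSemidef_sub {n : Type*} [Fintype n] [DecidableEq n]
    {P Q : Matrix n n ℝ} (h : (P - Q).PosSemidef) (x : EuclideanSpace ℝ n) :
    ⟪x, Q.toEuclideanLin x⟫ ≤ ⟪x, P.toEuclideanLin x⟫ := by
  have := (isPositive_toEuclideanLin_iff.mpr h).inner_nonneg_right x
  rwa [map_sub, LinearMap.sub_apply, inner_sub_right, sub_nonneg] at this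

theorem rightInverse_toEuclideanLin_inv {𝕜 n : Type*} [RCLike 𝕜] [Fintype n] [DecidableEq n]
    {V : Matrix n n 𝕜} (hV : IsUnit V) :
    Function.RightInverse V⁻¹.toEuclideanLin V.toEuclideanLin := fun u => by
  rw [← LinearMap.comp_apply, ← toLpLin_mul_same,
    mul_nonsing_inv _ ((isUnit_iff_isUnit_det V).mp hV), toLpLin_one, LinearMap.id_apply]

end Matrix

theorem scaled_extragradient_strongly_monotone_contraction_general
    (d : ℕ) (μ L : ℝ) (hμ : 0 < μ) (hμL : μ ≤ L)
    (F : EuclideanSpace ℝ (Fin d) → EuclideanSpace ℝ (Fin d))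
    (hFmono : ∀ z₁ z₂, μ * ‖z₁ - z₂‖ ^ 2 ≤ ⟪F z₁ - F z₂, z₁ - z₂⟫)
    (hFlip : ∀ z₁ z₂, ‖F z₁ - F z₂‖ ≤ L * ‖z₁ - z₂‖)
    (zstar : EuclideanSpace ℝ (Fin d)) (hzstar : F zstar = 0)
    (e Γ γ δ : ℝ) (he : 0 < e) (heΓ : e ≤ Γ)
    (hγ0 : 0 < γ) (hγ : γ ≤ e / (4 * L)) (hδ : 0 ≤ δ)
    (V V' : Matrix (Fin d) (Fin d) ℝ)
    (hVsymm : V.IsHermitian)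
    (hVpd : V.PosDef)
    (hVe : (V - e • (1 : Matrix (Fin d) (Fin d) ℝ)).PosSemidef)
    (hVΓ : (Γ • (1 : Matrix (Fin d) (Fin d) ℝ) - V).PosSemidef)
    (hgrow : ((1 + δ) • V - V').PosSemidef)
    (zt zth zt1 : EuclideanSpace ℝ (Fin d))
    (hzth : zth = zt - γ • (Matrix.toEuclideanLin V⁻¹) (F zt))
    (hzt1 : zt1 = zt - γ • (Matrix.toEuclideanLin V⁻¹) (F zth)) :
    ⟪zt1 - zstar, (Matrix.toEuclideanLin V') (zt1 - zstar)⟫ ≤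
      (1 - γ * μ / Γ) * (1 + δ) *
        ⟪zt - zstar, (Matrix.toEuclideanLin V) (zt - zstar)⟫ := by
  have hγL : γ * L ≤ e / 4 := by
    rw [le_div_iff₀ (by linarith)] at hγ
    linarith
  have hVe' (x : EuclideanSpace ℝ (Fin d)) : e * ‖x‖ ^ 2 ≤ ⟪x, V.toEuclideanLin x⟫ := by
    simpa [real_inner_smul_right, real_inner_self_eq_norm_sq] using
      Matrix.inner_toEuclideanLin_le_of_posSemidef_sub hVe x
  have hVΓ' (x : EuclideanSpace ℝ (Fin d)) : ⟪x, V.toEuclideanLin x⟫ ≤ Γ * ‖x‖ ^ 2 := by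
    simpa [real_inner_smul_right, real_inner_self_eq_norm_sq] using
      Matrix.inner_toEuclideanLin_le_of_posSemidef_sub hVΓ x
  have hcontr := extragradient_contraction (Matrix.isSymmetric_toEuclideanLin_iff.mpr hVsymm)
    (Matrix.rightInverse_toEuclideanLin_inv hVpd.isUnit) he hVe' (he.trans_le heΓ) hVΓ' hμ.le
    hFmono hFlip hzstar hγ0.le hγL hzth hzt1
  calc ⟪zt1 - zstar, V'.toEuclideanLin (zt1 - zstar)⟫
      ≤ (1 + δ) * ⟪zt1 - zstar, V.toEuclideanLin (zt1 - zstar)⟫ := by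
        simpa [real_inner_smul_right] using
          Matrix.inner_toEuclideanLin_le_of_posSemidef_sub hgrow (zt1 - zstar)
    _ ≤ (1 + δ) * ((1 - γ * μ / Γ) * ⟪zt - zstar, V.toEuclideanLin (zt - zstar)⟫) :=
        mul_le_mul_of_nonneg_left hcontr (by linarith)
    _ = (1 - γ * μ / Γ) * (1 + δ) * ⟪zt - zstar, V.toEuclideanLin (zt - zstar)⟫ := by ring

/-- The strongly monotone case of Theorem 1 (inequality (10)), specialized to exact
gradients and deterministic preconditioner updates: one step of the Scaled Extra
Gradient method contracts the weighted distance to the solution,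
`‖z_{t+1} − z*‖²_{V̂'} ≤ (1 − γμ/Γ)(1 + δ)‖z_t − z*‖²_{V̂}`. -/
theorem scaled_extragradient_strongly_monotone_contraction
    (d : ℕ) (μ L : ℝ) (hμ : 0 < μ) (hμL : μ ≤ L)
    (F : EuclideanSpace ℝ (Fin d) → EuclideanSpace ℝ (Fin d))
    (hFmono : ∀ z₁ z₂, μ * ‖z₁ - z₂‖ ^ 2 ≤ ⟪F z₁ - F z₂, z₁ - z₂⟫)
    (hFlip : ∀ z₁ z₂, ‖F z₁ - F z₂‖ ≤ L * ‖z₁ - z₂‖)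
    (zstar : EuclideanSpace ℝ (Fin d)) (hzstar : F zstar = 0)
    (e Γ γ δ : ℝ) (he : 0 < e) (heΓ : e ≤ Γ)
    (hγ0 : 0 < γ) (hγ : γ ≤ e / (4 * L)) (hδ : 0 ≤ δ)
    (V V' : Matrix (Fin d) (Fin d) ℝ)
    (hVsymm : V.IsHermitian) (hV'symm : V'.IsHermitian)
    (hVpd : V.PosDef) (hV'pd : V'.PosDef)
    (hVe : (V - e • (1 : Matrix (Fin d) (Fin d) ℝ)).PosSemidef)
    (hVΓ : (Γ • (1 : Matrix (Fin d) (Fin d) ℝ) - V).PosSemidef)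
    (hgrow : ((1 + δ) • V - V').PosSemidef)
    (zt zth zt1 : EuclideanSpace ℝ (Fin d))
    (hzth : zth = zt - γ • (Matrix.toEuclideanLin V⁻¹) (F zt))
    (hzt1 : zt1 = zt - γ • (Matrix.toEuclideanLin V⁻¹) (F zth)) :
    ⟪zt1 - zstar, (Matrix.toEuclideanLin V') (zt1 - zstar)⟫ ≤
      (1 - γ * μ / Γ) * (1 + δ) *
        ⟪zt - zstar, (Matrix.toEuclideanLin V) (zt - zstar)⟫ :=
  scaled_extragradient_strongly_monotone_contraction_general d μ L hμ hμL F hFmono hFlip zstar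
    hzstar e Γ γ δ he heΓ hγ0 hγ hδ V V' hVsymm hVpd hVe hVΓ hgrow zt zth zt1 hzth hzt1
end

section
/- Let f : ℝ^{d_x} × ℝ^{d_y} → ℝ be differentiable, convex in x for each fixed y and concave in y for each fixed x, and let F : ℝ^{d_x+d_y} → ℝ^{d_x+d_y} be its saddle operator F(x,y) = (∇_x f(x,y), −∇_y f(x,y)); assume F is L-Lipschitz. Let 0 < e ≤ Γ, 0 < γ ≤ e/(2L), Ω > 0, T ≥ 1. Let X ⊂ ℝ^{d_x}, Y ⊂ ℝ^{d_y} be nonempty compact sets such that ‖(x',y')‖ ≤ Ω for all (x',y') ∈ X × Y. Let V̂_0, …, V̂_{T} be symmetric positive definite diagonal matrices with e·I ≼ V̂_t ≼ Γ·I and V̂_{t+1} ≼ (1 + δ_{t+1})·V̂_t for nonnegative reals δ_1, …, δ_T. Define iterates z_{t+1/2} = z_t − γ·V̂_t⁻¹F(z_t) and z_{t+1} = z_t − γ·V̂_t⁻¹F(z_{t+1/2}), and suppose ‖z_t‖ ≤ Ω for all 0 ≤ t ≤ T. Let (x̄_T, ȳ_T) = (1/T)·Σ_{t=0}^{T−1}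 z_{t+1/2}. Then max_{y'∈Y} f(x̄_T, y') − min_{x'∈X} f(x', ȳ_T) ≤ 3ΓΩ²/(γT) + (2ΓΩ²/(γT))·Σ_{t=1}^{T} δ_t. -/
open RealInnerProductSpace

noncomputable def joinxy {dx dy : ℕ} (x : EuclideanSpace ℝ (Fin dx))
    (y : EuclideanSpace ℝ (Fin dy)) : EuclideanSpace ℝ (Fin dx ⊕ Fin dy) :=
  WithLp.toLp 2 (fun i => Sum.elim (fun a => x a) (fun b => y b) i)

noncomputable def xpart {dx dy : ℕ} (z : EuclideanSpace ℝ (Fin dx ⊕ Fin dy)) :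
    EuclideanSpace ℝ (Fin dx) := WithLp.toLp 2 (fun i => z (Sum.inl i))

noncomputable def ypart {dx dy : ℕ} (z : EuclideanSpace ℝ (Fin dx ⊕ Fin dy)) :
    EuclideanSpace ℝ (Fin dy) := WithLp.toLp 2 (fun j => z (Sum.inr j))

section MatrixAux
open Matrix
variable {n : Type*} [Fintype n] [DecidableEq n]

lemma inner_toEuclideanLin (A : Matrix n n ℝ) (v w : EuclideanSpace ℝ n) :
    ⟪v, Matrix.toEuclideanLin A w⟫ =
      dotProduct (WithLp.equiv 2 (n → ℝ) v) (A *ᵥ (WithLp.equiv 2 (n → ℝ) w)) := by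
  rw [EuclideanSpace.inner_eq_star_dotProduct]
  simp [Matrix.toEuclideanLin_apply]
  exact dotProduct_comm _ _

lemma posSemidef_inner_nonneg {A : Matrix n n ℝ} (hA : A.PosSemidef) (v : EuclideanSpace ℝ n) :
    0 ≤ ⟪v, Matrix.toEuclideanLin A v⟫ := by
  have h := hA.re_dotProduct_nonneg (WithLp.equiv 2 (n → ℝ) v)
  simpa [inner_toEuclideanLin] using h

lemma inner_toEuclideanLin_symm {A : Matrix n n ℝ} (hA : A.IsDiag) (v w : EuclideanSpace ℝ n) :
    ⟪v, Matrix.toEuclideanLin A w⟫ = ⟪w, Matrix.toEuclideanLin A v⟫ := by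
  have hAt : Aᵀ = A := by
    ext i j
    by_cases h : i = j
    · subst h; rfl
    · rw [Matrix.transpose_apply, hA (Ne.symm h), hA h]
  rw [inner_toEuclideanLin, inner_toEuclideanLin,
    Matrix.dotProduct_mulVec, ← Matrix.mulVec_transpose, hAt, dotProduct_comm]

lemma toEuclideanLin_one_apply (v : EuclideanSpace ℝ n) :
    Matrix.toEuclideanLin (1 : Matrix n n ℝ) v = v := by
  simp [Matrix.toEuclideanLin_apply, Matrix.one_mulVec]

end MatrixAux

section GradAux
variable {E : Type*} [NormedAddCommGroup E] [InnerProductSpace ℝ E] [CompleteSpace E]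

lemma convexOn_gradient_le {g : E → ℝ} (hc : ConvexOn ℝ Set.univ g) {x g' : E}
    (hg : HasGradientAt g g' x) (v : E) : g x + ⟪g', v⟫ ≤ g (x + v) := by
  set h : ℝ → ℝ := fun t => g (t • v + x) with hh
  have hA : ConvexOn ℝ Set.univ h := by
    have h1 := hc.comp_affineMap (AffineMap.lineMap x (x + v) : ℝ →ᵃ[ℝ] E)
    have h2 : (g ∘ (AffineMap.lineMap x (x + v) : ℝ →ᵃ[ℝ] E)) = h := by
      funext t
      simp [hh, AffineMap.lineMap_apply, add_sub_cancel_left]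
    rw [h2] at h1
    simpa using h1
  have hcurve : HasDerivAt (fun t : ℝ => t • v + x) v 0 := by
    simpa using ((hasDerivAt_id (0:ℝ)).smul_const v).add_const x
  have hFd : HasFDerivAt g (InnerProductSpace.toDual ℝ E g') ((0:ℝ) • v + x) := by
    simpa using hasGradientAt_iff_hasFDerivAt.mp hg
  have hh' : HasDerivAt h ⟪g', v⟫ 0 := by
    have := hFd.comp_hasDerivAt 0 hcurve
    exact this
  have hs := hA.le_slope_of_hasDerivAt (Set.mem_univ (0:ℝ)) (Set.mem_univ 1) zero_lt_one hh'
  have hslope : slope h 0 1 = h 1 - h 0 := by simp [slope]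
  rw [hslope] at hs
  have h0 : h 0 = g x := by simp [hh]
  have h1 : h 1 = g (x + v) := by simp [hh, add_comm]
  rw [h0, h1] at hs
  linarith
end GradAux

lemma inner_joinxy {dx dy : ℕ} (a c : EuclideanSpace ℝ (Fin dx)) (b d : EuclideanSpace ℝ (Fin dy)) :
    ⟪joinxy a b, joinxy c d⟫ = ⟪a, c⟫ + ⟪b, d⟫ := by
  simp [PiLp.inner_apply, joinxy, Fintype.sum_sum_type]

lemma sub_joinxy {dx dy : ℕ} (w : EuclideanSpace ℝ (Fin dx ⊕ Fin dy))
    (x' : EuclideanSpace ℝ (Fin dx)) (y' : EuclideanSpace ℝ (Fin dy)) :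
    w - joinxy x' y' = joinxy (xpart w - x') (ypart w - y') := by
  ext i; cases i <;> rfl

noncomputable def xpartL (dx dy : ℕ) :
    EuclideanSpace ℝ (Fin dx ⊕ Fin dy) →ₗ[ℝ] EuclideanSpace ℝ (Fin dx) where
  toFun := xpart
  map_add' _ _ := rfl
  map_smul' _ _ := rfl

noncomputable def ypartL (dx dy : ℕ) :
    EuclideanSpace ℝ (Fin dx ⊕ Fin dy) →ₗ[ℝ] EuclideanSpace ℝ (Fin dy) where
  toFun := ypart
  map_add' _ _ := rfl
  map_smul' _ _ := rfl

set_option maxHeartbeats 3200000 in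
/-- The convex–concave case of Theorem 1 (inequality (11)), specialized to exact
gradients and deterministic preconditioner updates: the duality gap of the averaged
iterates of the Scaled Extra Gradient method is bounded by
`3ΓΩ²/(γT) + (2ΓΩ²/(γT))Σ_{t=1}^{T} δ_t`. -/
theorem scaled_extragradient_convex_concave_gap
    (dx dy : ℕ)
    (f : EuclideanSpace ℝ (Fin dx) → EuclideanSpace ℝ (Fin dy) → ℝ)
    (hfx : ∀ y, Differentiable ℝ (fun x => f x y))
    (hfy : ∀ x, Differentiable ℝ (f x))
    (hconv : ∀ y, ConvexOn ℝ Set.univ (fun x => f x y))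
    (hconc : ∀ x, ConcaveOn ℝ Set.univ (f x))
    (F : EuclideanSpace ℝ (Fin dx ⊕ Fin dy) → EuclideanSpace ℝ (Fin dx ⊕ Fin dy))
    (hFdef : ∀ z, F z = joinxy (gradient (fun x => f x (ypart z)) (xpart z))
      (-gradient (f (xpart z)) (ypart z)))
    (L e Γ γ Ω : ℝ) (hL : 0 < L)
    (hFlip : ∀ z₁ z₂, ‖F z₁ - F z₂‖ ≤ L * ‖z₁ - z₂‖)
    (he : 0 < e) (heΓ : e ≤ Γ)
    (hγ0 : 0 < γ) (hγ : γ ≤ e / (2 * L)) (hΩ : 0 < Ω)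
    (T : ℕ) (hT : 1 ≤ T)
    (X : Set (EuclideanSpace ℝ (Fin dx))) (Y : Set (EuclideanSpace ℝ (Fin dy)))
    (hXne : X.Nonempty) (hXc : IsCompact X)
    (hYne : Y.Nonempty) (hYc : IsCompact Y)
    (hXYb : ∀ x' ∈ X, ∀ y' ∈ Y, ‖joinxy x' y'‖ ≤ Ω)
    (V : ℕ → Matrix (Fin dx ⊕ Fin dy) (Fin dx ⊕ Fin dy) ℝ) (δ : ℕ → ℝ)
    (hVdiag : ∀ t ≤ T, (V t).IsDiag)
    (hVpd : ∀ t ≤ T, (V t).PosDef)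
    (hVe : ∀ t ≤ T, (V t - e • (1 : Matrix (Fin dx ⊕ Fin dy) (Fin dx ⊕ Fin dy) ℝ)).PosSemidef)
    (hVΓ : ∀ t ≤ T, (Γ • (1 : Matrix (Fin dx ⊕ Fin dy) (Fin dx ⊕ Fin dy) ℝ) - V t).PosSemidef)
    (hδ : ∀ t, 1 ≤ t → t ≤ T → 0 ≤ δ t)
    (hVgrow : ∀ t < T, ((1 + δ (t + 1)) • V t - V (t + 1)).PosSemidef)
    (z zh : ℕ → EuclideanSpace ℝ (Fin dx ⊕ Fin dy))
    (hzh : ∀ t < T, zh t = z t - γ • (Matrix.toEuclideanLin (V t)⁻¹) (F (z t)))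
    (hz : ∀ t < T, z (t + 1) = z t - γ • (Matrix.toEuclideanLin (V t)⁻¹) (F (zh t)))
    (hzb : ∀ t ≤ T, ‖z t‖ ≤ Ω)
    (zavg : EuclideanSpace ℝ (Fin dx ⊕ Fin dy))
    (hzavg : zavg = (T : ℝ)⁻¹ • ∑ t ∈ Finset.range T, zh t) :
    sSup ((fun y' => f (xpart zavg) y') '' Y) -
        sInf ((fun x' => f x' (ypart zavg)) '' X) ≤
      3 * Γ * Ω ^ 2 / (γ * T) +
        (2 * Γ * Ω ^ 2 / (γ * T)) * ∑ t ∈ Finset.Icc 1 T, δ t := by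
  classical
  have hT0 : (0:ℝ) < T := by exact_mod_cast hT
  have hΓ0 : (0:ℝ) < Γ := lt_of_lt_of_le he heΓ
  set M : ℕ → (EuclideanSpace ℝ (Fin dx ⊕ Fin dy) →ₗ[ℝ] EuclideanSpace ℝ (Fin dx ⊕ Fin dy)) :=
    fun t => Matrix.toEuclideanLin (V t) with hM
  -- lower bound e‖v‖² ≤ ⟪v, M t v⟫
  have hq0 : ∀ t ≤ T, ∀ v, e * ‖v‖^2 ≤ ⟪v, M t v⟫ := by
    intro t ht v
    have h := posSemidef_inner_nonneg (hVe t ht) v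
    have heq : Matrix.toEuclideanLin (V t - e • (1 : Matrix (Fin dx ⊕ Fin dy) (Fin dx ⊕ Fin dy) ℝ)) v
        = M t v - e • v := by
      rw [map_sub, map_smul]
      simp [hM, toEuclideanLin_one_apply]
    rw [heq, inner_sub_right, real_inner_smul_right, real_inner_self_eq_norm_sq] at h
    linarith
  have hqΓ : ∀ t ≤ T, ∀ v, ⟪v, M t v⟫ ≤ Γ * ‖v‖^2 := by
    intro t ht v
    have h := posSemidef_inner_nonneg (hVΓ t ht) v
    have heq : Matrix.toEuclideanLin ((Γ • (1 : Matrix (Fin dx ⊕ Fin dy) (Fin dx ⊕ Fin dy) ℝ)) - V t) v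
        = Γ • v - M t v := by
      rw [map_sub, map_smul]
      simp [hM, toEuclideanLin_one_apply]
    rw [heq, inner_sub_right, real_inner_smul_right, real_inner_self_eq_norm_sq] at h
    linarith
  have hgrow : ∀ t < T, ∀ v, ⟪v, M (t+1) v⟫ ≤ (1 + δ (t+1)) * ⟪v, M t v⟫ := by
    intro t ht v
    have h := posSemidef_inner_nonneg (hVgrow t ht) v
    have heq : Matrix.toEuclideanLin ((1 + δ (t+1)) • V t - V (t+1)) v
        = (1 + δ (t+1)) • M t v - M (t+1) v := by
      rw [map_sub, map_smul]
      simp [hM]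
    rw [heq, inner_sub_right, real_inner_smul_right] at h
    linarith
  have hMinv : ∀ t ≤ T, ∀ w, M t ((Matrix.toEuclideanLin (V t)⁻¹) w) = w := by
    intro t ht w
    have hdet : IsUnit (V t).det := (hVpd t ht).det_pos.ne'.isUnit
    have hVV : V t * (V t)⁻¹ = 1 := Matrix.mul_nonsing_inv _ hdet
    have : M t ((Matrix.toEuclideanLin (V t)⁻¹) w)
        = Matrix.toEuclideanLin (V t * (V t)⁻¹) w := by
      simp [hM, Matrix.toEuclideanLin_apply, Matrix.mulVec_mulVec]
    rw [this, hVV, toEuclideanLin_one_apply]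
  have hsymm : ∀ t ≤ T, ∀ v w, ⟪v, M t w⟫ = ⟪w, M t v⟫ :=
    fun t ht v w => inner_toEuclideanLin_symm (hVdiag t ht) v w
  -- key one-step inequality
  have key : ∀ t < T, ∀ u : EuclideanSpace ℝ (Fin dx ⊕ Fin dy), ‖u‖ ≤ Ω →
      γ * ⟪F (zh t), zh t - u⟫ ≤
        (1/2) * ⟪z t - u, M t (z t - u)⟫ - (1/2) * ⟪z (t+1) - u, M t (z (t+1) - u)⟫ := by
    intro t ht u hu
    have htT : t ≤ T := le_of_lt ht
    set a := z t with ha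
    set b := zh t with hb
    set c := z (t+1) with hc
    have hab : M t (a - b) = γ • F a := by
      rw [hb, hzh t ht]
      have h1 : a - (a - γ • (Matrix.toEuclideanLin (V t)⁻¹) (F a))
          = γ • (Matrix.toEuclideanLin (V t)⁻¹) (F a) := by abel
      rw [h1, map_smul, hMinv t htT]
    have hac : M t (a - c) = γ • F b := by
      rw [hc, hz t ht]
      have h1 : a - (a - γ • (Matrix.toEuclideanLin (V t)⁻¹) (F b))
          = γ • (Matrix.toEuclideanLin (V t)⁻¹) (F b) := by abel
      rw [h1, map_smul, hMinv t htT]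
    have e1 : ⟪M t (a - c), c - u⟫ = (1/2) * ⟪a-u, M t (a-u)⟫
        - (1/2) * ⟪a-c, M t (a-c)⟫ - (1/2) * ⟪c-u, M t (c-u)⟫ := by
      have hx : a - u = (a - c) + (c - u) := by abel
      rw [hx]
      simp only [map_add, inner_add_left, inner_add_right]
      linarith [hsymm t htT (a-c) (c-u), real_inner_comm (M t (a-c)) (c-u)]
    have e2 : ⟪M t (a - b), b - c⟫ = (1/2) * ⟪a-c, M t (a-c)⟫
        - (1/2) * ⟪a-b, M t (a-b)⟫ - (1/2) * ⟪b-c, M t (b-c)⟫ := by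
      have hx : a - c = (a - b) + (b - c) := by abel
      rw [hx]
      simp only [map_add, inner_add_left, inner_add_right]
      linarith [hsymm t htT (a-b) (b-c), real_inner_comm (M t (a-b)) (b-c)]
    have hdec : γ * ⟪F b, b - u⟫ = ⟪M t (a-c), c-u⟫ + ⟪M t (a-b), b-c⟫
        + γ * ⟪F b - F a, b - c⟫ := by
      have hbu : b - u = (c - u) + (b - c) := by abel
      rw [hbu, inner_add_right, hac, hab, real_inner_smul_left, real_inner_smul_left,
        inner_sub_left]
      ring
    have hR : γ * ⟪F b - F a, b - c⟫ ≤ (1/2) * ⟪a-b, M t (a-b)⟫ + (1/2) * ⟪b-c, M t (b-c)⟫ := by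
      have h1 : ⟪F b - F a, b - c⟫ ≤ ‖F b - F a‖ * ‖b - c‖ := real_inner_le_norm _ _
      have h2 : ‖F b - F a‖ ≤ L * ‖a - b‖ := by
        have := hFlip b a
        rwa [norm_sub_rev b a] at this
      have h3 := hq0 t htT (a-b)
      have h4 := hq0 t htT (b-c)
      have hn1 : (0:ℝ) ≤ ‖a - b‖ := norm_nonneg _
      have hn2 : (0:ℝ) ≤ ‖b - c‖ := norm_nonneg _
      have hγ2L : γ * (2*L) ≤ e := (le_div_iff₀ (by positivity)).mp hγ
      have h6 : γ * ⟪F b - F a, b - c⟫ ≤ γ * (‖F b - F a‖ * ‖b - c‖) :=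
        mul_le_mul_of_nonneg_left h1 hγ0.le
      have h7 : ‖F b - F a‖ * ‖b - c‖ ≤ (L * ‖a - b‖) * ‖b - c‖ :=
        mul_le_mul_of_nonneg_right h2 hn2
      have h8 : γ * (‖F b - F a‖ * ‖b - c‖) ≤ γ * ((L * ‖a - b‖) * ‖b - c‖) :=
        mul_le_mul_of_nonneg_left h7 hγ0.le
      have hP : (0:ℝ) ≤ ‖a-b‖ * ‖b-c‖ := mul_nonneg hn1 hn2
      have h9 : γ * ((L * ‖a - b‖) * ‖b - c‖) ≤ (e/2) * (‖a-b‖ * ‖b-c‖) := by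
        have heq : γ * ((L * ‖a - b‖) * ‖b - c‖) = (γ*(2*L)) * (‖a-b‖*‖b-c‖) / 2 := by ring
        rw [heq]
        have h9' := mul_le_mul_of_nonneg_right hγ2L hP
        linarith
      have h10 : (e/2) * (‖a-b‖*‖b-c‖) ≤ (e/4)*‖a-b‖^2 + (e/4)*‖b-c‖^2 := by
        nlinarith [mul_nonneg he.le (sq_nonneg (‖a-b‖ - ‖b-c‖))]
      have hex1 : (0:ℝ) ≤ e*‖a-b‖^2 := by positivity
      have hex2 : (0:ℝ) ≤ e*‖b-c‖^2 := by positivity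
      linarith
    rw [hdec, e1, e2]
    linarith
  -- bound on ‖z t - u‖
  have hzub : ∀ t ≤ T, ∀ u : EuclideanSpace ℝ (Fin dx ⊕ Fin dy), ‖u‖ ≤ Ω → ‖z t - u‖ ≤ 2*Ω := by
    intro t ht u hu
    calc ‖z t - u‖ ≤ ‖z t‖ + ‖u‖ := norm_sub_le _ _
      _ ≤ 2*Ω := by linarith [hzb t ht]
  have hq4 : ∀ t ≤ T, ∀ s ≤ T, ∀ u : EuclideanSpace ℝ (Fin dx ⊕ Fin dy), ‖u‖ ≤ Ω →
      ⟪z s - u, M t (z s - u)⟫ ≤ 4*Γ*Ω^2 := by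
    intro t ht s hs u hu
    have h1 := hqΓ t ht (z s - u)
    have h2 : ‖z s - u‖^2 ≤ (2*Ω)^2 :=
      pow_le_pow_left₀ (norm_nonneg _) (hzub s hs u hu) 2
    nlinarith
  -- summed inequality
  have sumkey : ∀ u : EuclideanSpace ℝ (Fin dx ⊕ Fin dy), ‖u‖ ≤ Ω →
      ∑ t ∈ Finset.range T, γ * ⟪F (zh t), zh t - u⟫
        ≤ 2*Γ*Ω^2 + 2*Γ*Ω^2 * ∑ t ∈ Finset.Icc 1 T, δ t := by
    intro u hu
    set A : ℕ → ℝ := fun t => (1/2) * ⟪z t - u, M t (z t - u)⟫ with hA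
    set C : ℕ → ℝ := fun t => (1/2) * ⟪z (t+1) - u, M t (z (t+1) - u)⟫ with hC
    have h1 : ∑ t ∈ Finset.range T, γ * ⟪F (zh t), zh t - u⟫
        ≤ ∑ t ∈ Finset.range T, (A t - C t) :=
      Finset.sum_le_sum (fun t ht => by
        have := key t (Finset.mem_range.mp ht) u hu
        simp only [hA, hC]
        linarith)
    have hAC : ∀ t, t + 1 ≤ T → A (t+1) ≤ C t + 2*Γ*Ω^2 * δ (t+1) := by
      intro t ht1
      have ht : t < T := ht1
      have hg := hgrow t ht (z (t+1) - u)
      have hδ' : 0 ≤ δ (t+1) := hδ (t+1) (Nat.succ_le_succ (Nat.zero_le t)) ht1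
      have hq4' := hq4 t ht.le (t+1) ht1 u hu
      have hmul : δ (t+1) * ⟪z (t+1) - u, M t (z (t+1) - u)⟫ ≤ δ (t+1) * (4*Γ*Ω^2) :=
        mul_le_mul_of_nonneg_left hq4' hδ'
      simp only [hA, hC]
      nlinarith
    obtain ⟨S, hS⟩ : ∃ S, T = S + 1 := ⟨T - 1, by omega⟩
    have hA0 : A 0 ≤ 2*Γ*Ω^2 := by
      have := hq4 0 (Nat.zero_le T) 0 (Nat.zero_le T) u hu
      simp only [hA]
      linarith
    have hCS : 0 ≤ C S := by
      have h1 := hq0 S (by omega) (z (S+1) - u)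
      simp only [hC]
      nlinarith [norm_nonneg (z (S+1) - u), sq_nonneg ‖z (S+1) - u‖]
    have hIcc : ∑ i ∈ Finset.range S, δ (i+1) ≤ ∑ t ∈ Finset.Icc 1 T, δ t := by
      have heq : ∑ t ∈ Finset.Icc 1 S, δ t = ∑ i ∈ Finset.range S, δ (i+1) := by
        rw [← Finset.Ico_add_one_right_eq_Icc, Finset.sum_Ico_eq_sum_range]
        exact Finset.sum_congr rfl (fun i _ => by rw [Nat.add_comm])
      rw [← heq]
      apply Finset.sum_le_sum_of_subset_of_nonneg
      · exact Finset.Icc_subset_Icc_right (by omega)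
      · intro t ht _
        exact hδ t (Finset.mem_Icc.mp ht).1 (Finset.mem_Icc.mp ht).2
    have h2 : ∑ t ∈ Finset.range T, (A t - C t)
        ≤ 2*Γ*Ω^2 + 2*Γ*Ω^2 * ∑ t ∈ Finset.Icc 1 T, δ t := by
      have hrange : Finset.range T = Finset.range (S+1) := by rw [hS]
      rw [hrange, Finset.sum_sub_distrib, Finset.sum_range_succ', Finset.sum_range_succ]
      have h3 : ∑ i ∈ Finset.range S, A (i+1) - ∑ i ∈ Finset.range S, C i
          ≤ 2*Γ*Ω^2 * ∑ t ∈ Finset.Icc 1 T, δ t := by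
        rw [← Finset.sum_sub_distrib]
        calc ∑ i ∈ Finset.range S, (A (i+1) - C i)
            ≤ ∑ i ∈ Finset.range S, 2*Γ*Ω^2 * δ (i+1) :=
              Finset.sum_le_sum (fun i hi => by
                have := hAC i (by have := Finset.mem_range.mp hi; omega)
                linarith)
          _ = 2*Γ*Ω^2 * ∑ i ∈ Finset.range S, δ (i+1) := by rw [Finset.mul_sum]
          _ ≤ 2*Γ*Ω^2 * ∑ t ∈ Finset.Icc 1 T, δ t := by
              apply mul_le_mul_of_nonneg_left hIcc (by positivity)
      linarith
    linarith
  -- saddle point inequality per iterate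
  have saddle : ∀ t < T, ∀ x' ∈ X, ∀ y' ∈ Y,
      f (xpart (zh t)) y' - f x' (ypart (zh t)) ≤ ⟪F (zh t), zh t - joinxy x' y'⟫ := by
    intro t ht x' hx' y' hy'
    set w := zh t with hw
    set xw := xpart w with hxw
    set yw := ypart w with hyw
    have hgx : HasGradientAt (fun x => f x yw) (gradient (fun x => f x yw) xw) xw :=
      ((hfx yw) xw).hasGradientAt
    have hcx := convexOn_gradient_le (hconv yw) hgx (x' - xw)
    have hxx : xw + (x' - xw) = x' := by abel
    rw [hxx] at hcx
    have hneg : x' - xw = -(xw - x') := by abel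
    rw [hneg, inner_neg_right] at hcx
    have hgy0 : HasGradientAt (f xw) (gradient (f xw) yw) yw := ((hfy xw) yw).hasGradientAt
    have hgy : HasGradientAt (fun y => -(f xw y)) (-(gradient (f xw) yw)) yw := by
      rw [hasGradientAt_iff_hasFDerivAt] at hgy0 ⊢
      have h' := hgy0.neg
      simp [map_neg] at h' ⊢
      exact h'
    have hcy := convexOn_gradient_le ((hconc xw).neg) hgy (y' - yw)
    have hyy : yw + (y' - yw) = y' := by abel
    rw [hyy] at hcy
    have hneg2 : y' - yw = -(yw - y') := by abel
    rw [hneg2, inner_neg_right] at hcy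
    have hFw : F w = joinxy (gradient (fun x => f x yw) xw) (-(gradient (f xw) yw)) := hFdef w
    rw [hFw, sub_joinxy, inner_joinxy]
    simp only [Pi.neg_apply] at hcy
    linarith
  -- Jensen's inequality for the averaged iterate
  have jensen : ∀ x' ∈ X, ∀ y' ∈ Y,
      f (xpart zavg) y' - f x' (ypart zavg) ≤
        ∑ t ∈ Finset.range T, (T:ℝ)⁻¹ * (f (xpart (zh t)) y' - f x' (ypart (zh t))) := by
    intro x' hx' y' hy'
    have hφ : ConvexOn ℝ Set.univ
        (fun w : EuclideanSpace ℝ (Fin dx ⊕ Fin dy) => f (xpart w) y' - f x' (ypart w)) := by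
      have h1 : ConvexOn ℝ Set.univ (fun w : EuclideanSpace ℝ (Fin dx ⊕ Fin dy) =>
          f (xpart w) y') := by
        have := (hconv y').comp_affineMap (xpartL dx dy).toAffineMap
        simp [xpartL, Function.comp] at this
        exact this
      have h2 : ConvexOn ℝ Set.univ (fun w : EuclideanSpace ℝ (Fin dx ⊕ Fin dy) =>
          -(f x' (ypart w))) := by
        have := ((hconc x').neg).comp_affineMap (ypartL dx dy).toAffineMap
        simp [ypartL, Function.comp] at this
        exact this
      have h3 := h1.add h2
      simp only [sub_eq_add_neg]
      exact h3
    have hw1 : ∑ _t ∈ Finset.range T, (T:ℝ)⁻¹ = 1 := by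
      rw [Finset.sum_const, Finset.card_range, nsmul_eq_mul]
      field_simp
    have hj := hφ.map_sum_le (t := Finset.range T) (w := fun _ => (T:ℝ)⁻¹) (p := zh)
      (fun _ _ => by positivity) hw1 (fun _ _ => Set.mem_univ _)
    have hzs : ∑ t ∈ Finset.range T, (T:ℝ)⁻¹ • zh t = zavg := by
      rw [hzavg, Finset.smul_sum]
    rw [hzs] at hj
    simpa [smul_eq_mul] using hj
  -- assemble
  obtain ⟨ys, hysY, hysup⟩ :=
    hYc.exists_sSup_image_eq hYne ((hfy (xpart zavg)).continuous.continuousOn)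
  obtain ⟨xs, hxsX, hxinf⟩ :=
    hXc.exists_sInf_image_eq hXne ((hfx (ypart zavg)).continuous.continuousOn)
  rw [hysup, hxinf]
  set u := joinxy xs ys with hu'
  have hu : ‖u‖ ≤ Ω := hXYb xs hxsX ys hysY
  have main := jensen xs hxsX ys hysY
  have hTinv : (0:ℝ) ≤ (T:ℝ)⁻¹ := by positivity
  have step2 : ∑ t ∈ Finset.range T, (T:ℝ)⁻¹ * (f (xpart (zh t)) ys - f xs (ypart (zh t)))
      ≤ (T:ℝ)⁻¹ * ∑ t ∈ Finset.range T, ⟪F (zh t), zh t - u⟫ := by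
    rw [Finset.mul_sum]
    exact Finset.sum_le_sum (fun t ht =>
      mul_le_mul_of_nonneg_left (saddle t (Finset.mem_range.mp ht) xs hxsX ys hysY) hTinv)
  have step3 : ∑ t ∈ Finset.range T, ⟪F (zh t), zh t - u⟫
      ≤ (2*Γ*Ω^2 + 2*Γ*Ω^2 * ∑ t ∈ Finset.Icc 1 T, δ t)/γ := by
    have h := sumkey u hu
    rw [← Finset.mul_sum] at h
    rw [le_div_iff₀ hγ0]
    linarith
  have hδs : 0 ≤ ∑ t ∈ Finset.Icc 1 T, δ t :=
    Finset.sum_nonneg (fun t ht => hδ t (Finset.mem_Icc.mp ht).1 (Finset.mem_Icc.mp ht).2)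
  have step4 : (T:ℝ)⁻¹ * ∑ t ∈ Finset.range T, ⟪F (zh t), zh t - u⟫
      ≤ (T:ℝ)⁻¹ * ((2*Γ*Ω^2 + 2*Γ*Ω^2 * ∑ t ∈ Finset.Icc 1 T, δ t)/γ) :=
    mul_le_mul_of_nonneg_left step3 hTinv
  have hfinal : (T:ℝ)⁻¹ * ((2*Γ*Ω^2 + 2*Γ*Ω^2 * ∑ t ∈ Finset.Icc 1 T, δ t)/γ)
      ≤ 3 * Γ * Ω ^ 2 / (γ * T) + (2 * Γ * Ω ^ 2 / (γ * T)) * ∑ t ∈ Finset.Icc 1 T, δ t := by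
    have hdiff : 3 * Γ * Ω ^ 2 / (γ * T) + (2 * Γ * Ω ^ 2 / (γ * T)) * ∑ t ∈ Finset.Icc 1 T, δ t
        - (T:ℝ)⁻¹ * ((2*Γ*Ω^2 + 2*Γ*Ω^2 * ∑ t ∈ Finset.Icc 1 T, δ t)/γ)
        = Γ * Ω^2 / (γ * T) := by
      field_simp
      ring
    have hpos : (0:ℝ) ≤ Γ * Ω^2 / (γ * T) := by positivity
    linarith
  linarith
end

section
/- Let F : ℝ^d → ℝ^d be L-Lipschitz and suppose there exists z* ∈ ℝ^d with ‖z*‖ ≤ Ω such that ⟨F(z), z − z*⟩ ≥ 0 for all z ∈ ℝ^d (the minty condition). Let 0 < e ≤ Γ, 0 < γ ≤ e/(3L), T ≥ 1. Let V̂_0, …, V̂_T be symmetric positive definite diagonal matrices with e·I ≼ V̂_t ≼ Γ·I and V̂_{t+1} ≼ (1 + δ_{t+1})·V̂_t for nonnegative reals δ_1, …, δ_T. Define iterates z_{t+1/2} = z_t − γ·V̂_t⁻¹F(z_t) and z_{t+1} = z_t − γ·V̂_t⁻¹F(z_{t+1/2}), and suppose ‖z_t‖ ≤ Ω for all 0 ≤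 t ≤ T. Then (1/T)·Σ_{t=0}^{T−1} ‖F(z_t)‖² ≤ 12Γ²Ω²/(γ²T) + (12Γ²Ω²/γ²)·(1/T)·Σ_{t=1}^{T} δ_t. -/
set_option maxHeartbeats 1000000

lemma psd_diag_nonneg {d : ℕ} {M : Matrix (Fin d) (Fin d) ℝ} (h : M.PosSemidef) (i : Fin d) :
    0 ≤ M i i := by
  exact h.diag_nonneg

lemma diag_toEuclideanLin {d : ℕ} (w : Fin d → ℝ) (x : EuclideanSpace ℝ (Fin d)) (i : Fin d) :
    (Matrix.toEuclideanLin (Matrix.diagonal w)) x i = w i * x i := by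
  simp [Matrix.toEuclideanLin_apply, Matrix.mulVec_diagonal]

lemma norm_sq_eq_sum' {d : ℕ} (x : EuclideanSpace ℝ (Fin d)) : ‖x‖ ^ 2 = ∑ i, (x i)^2 := by
  rw [← real_inner_self_eq_norm_sq, PiLp.inner_apply]
  simp [sq]

lemma inner_eq_sum' {d : ℕ} (x y : EuclideanSpace ℝ (Fin d)) :
    (inner ℝ x y : ℝ) = ∑ i, x i * y i := by
  rw [PiLp.inner_apply]; simp [RCLike.inner_apply, mul_comm]

lemma diag_inv_eq {d : ℕ} (w : Fin d → ℝ) (hw : ∀ i, w i ≠ 0) :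
    (Matrix.diagonal w)⁻¹ = Matrix.diagonal (fun i => (w i)⁻¹) := by
  apply Matrix.inv_eq_right_inv
  rw [Matrix.diagonal_mul_diagonal]
  have : (fun i => w i * (w i)⁻¹) = fun _ : Fin d => (1:ℝ) := by
    funext i; exact mul_inv_cancel₀ (hw i)
  rw [this, Matrix.diagonal_one]

/-- The core one-step energy decrease, in pure coordinate/sum form. -/
lemma onestep {d : ℕ} {γ e Γ : ℝ} (he : 0 < e) (heΓ : e ≤ Γ) (hγ0 : 0 < γ)
    (v g h xx : Fin d → ℝ)
    (hve : ∀ i, e ≤ v i) (hvΓ : ∀ i, v i ≤ Γ)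
    (hlip : ∑ i, (h i - g i)^2 ≤ (e^2/9) * ∑ i, ((v i)⁻¹ * g i)^2)
    (hm : 0 ≤ ∑ i, h i * (xx i - γ * ((v i)⁻¹ * g i))) :
    ∑ i, v i * (xx i - γ*((v i)⁻¹ * h i))^2
      ≤ ∑ i, v i * xx i^2 - (8/9)*γ^2*Γ⁻¹ * ∑ i, g i^2 := by
  have hΓ0 : 0 < Γ := lt_of_lt_of_le he heΓ
  have hvpos : ∀ i, 0 < v i := fun i => lt_of_lt_of_le he (hve i)
  -- notation for the five key sums
  set A := ∑ i, h i * xx i with hA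
  set B := ∑ i, (v i)⁻¹ * h i * g i with hB
  set C := ∑ i, (v i)⁻¹ * h i ^ 2 with hC
  set D := ∑ i, (v i)⁻¹ * (h i - g i)^2 with hD
  set E := ∑ i, (v i)⁻¹ * g i ^ 2 with hE
  have hE0 : 0 ≤ E := Finset.sum_nonneg fun i _ =>
    mul_nonneg (inv_nonneg.2 (hvpos i).le) (sq_nonneg _)
  -- expansion of the quadratic
  have expand : ∑ i, v i * (xx i - γ*((v i)⁻¹ * h i))^2
      = (∑ i, v i * xx i^2) - 2*γ*A + γ^2*C := by
    rw [hA, hC, Finset.mul_sum, Finset.mul_sum, ← Finset.sum_sub_distrib,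
      ← Finset.sum_add_distrib]
    refine Finset.sum_congr rfl fun i _ => ?_
    have hv0 : v i ≠ 0 := (hvpos i).ne'
    field_simp
    ring
  -- minty gives γ * B ≤ A
  have hmB : γ * B ≤ A := by
    have : ∑ i, h i * (xx i - γ * ((v i)⁻¹ * g i)) = A - γ * B := by
      rw [hA, hB, Finset.mul_sum, ← Finset.sum_sub_distrib]
      exact Finset.sum_congr rfl fun i _ => by ring
    rw [this] at hm; linarith
  -- identity C = 2B - E + D
  have hCeq : C = 2*B - E + D := by
    rw [hB, hC, hD, hE, Finset.mul_sum, ← Finset.sum_sub_distrib, ← Finset.sum_add_distrib]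
    exact Finset.sum_congr rfl fun i _ => by ring
  -- D ≤ (1/9) E
  have hDE : D ≤ (1/9) * E := by
    have h1 : D ≤ e⁻¹ * ∑ i, (h i - g i)^2 := by
      rw [hD, Finset.mul_sum]
      refine Finset.sum_le_sum fun i _ => ?_
      exact mul_le_mul_of_nonneg_right (by
        exact inv_anti₀ he (hve i)) (sq_nonneg _)
    have h2 : ∑ i, ((v i)⁻¹ * g i)^2 ≤ e⁻¹ * E := by
      rw [hE, Finset.mul_sum]
      refine Finset.sum_le_sum fun i _ => ?_
      have : ((v i)⁻¹ * g i)^2 = (v i)⁻¹ * ((v i)⁻¹ * g i ^ 2) := by ring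
      rw [this]
      exact mul_le_mul_of_nonneg_right (inv_anti₀ he (hve i))
        (mul_nonneg (inv_nonneg.2 (hvpos i).le) (sq_nonneg _))
    have h3 : D ≤ e⁻¹ * ((e^2/9) * (e⁻¹ * E)) := by
      calc D ≤ e⁻¹ * ∑ i, (h i - g i)^2 := h1
        _ ≤ e⁻¹ * ((e^2/9) * ∑ i, ((v i)⁻¹ * g i)^2) :=
            mul_le_mul_of_nonneg_left hlip (inv_nonneg.2 he.le)
        _ ≤ e⁻¹ * ((e^2/9) * (e⁻¹ * E)) := by
            refine mul_le_mul_of_nonneg_left ?_ (inv_nonneg.2 he.le)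
            exact mul_le_mul_of_nonneg_left h2 (by positivity)
    have : e⁻¹ * ((e^2/9) * (e⁻¹ * E)) = (1/9) * E := by
      field_simp
    linarith [h3, this.symm.le]
  -- E ≥ Γ⁻¹ * ∑ g²
  have hEΓ : Γ⁻¹ * ∑ i, g i ^ 2 ≤ E := by
    rw [hE, Finset.mul_sum]
    refine Finset.sum_le_sum fun i _ => ?_
    exact mul_le_mul_of_nonneg_right (inv_anti₀ (hvpos i) (hvΓ i)) (sq_nonneg _)
  -- combine
  rw [expand, hCeq]
  have h4 : -2*γ*A ≤ -2*γ*(γ*B) := by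
    have := mul_le_mul_of_nonneg_left hmB (by positivity : (0:ℝ) ≤ 2*γ)
    linarith
  have h5 : γ^2 * D ≤ γ^2 * ((1/9)*E) := mul_le_mul_of_nonneg_left hDE (sq_nonneg γ)
  have h6 : (8/9)*γ^2*(Γ⁻¹ * ∑ i, g i ^2) ≤ (8/9)*γ^2*E :=
    mul_le_mul_of_nonneg_left hEΓ (by positivity)
  nlinarith [h4, h5, h6]

/-- The non-convex–non-concave (minty) case of Theorem 1 (inequality (12)),
specialized to exact gradients and deterministic preconditioner updates:
the average squared operator norm along the Scaled Extra Gradient iterates satisfies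
`(1/T)Σ_{t=0}^{T−1}‖F(z_t)‖² ≤ 12Γ²Ω²/(γ²T) + (12Γ²Ω²/γ²)(1/T)Σ_{t=1}^{T} δ_t`. -/
theorem scaled_extragradient_minty
    (d : ℕ) (L e Γ γ Ω : ℝ) (hL : 0 < L)
    (F : EuclideanSpace ℝ (Fin d) → EuclideanSpace ℝ (Fin d))
    (hFlip : ∀ z₁ z₂, ‖F z₁ - F z₂‖ ≤ L * ‖z₁ - z₂‖)
    (zstar : EuclideanSpace ℝ (Fin d)) (hzstarΩ : ‖zstar‖ ≤ Ω)
    (hminty : ∀ z : EuclideanSpace ℝ (Fin d), 0 ≤ (inner ℝ (F z) (z - zstar) : ℝ))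
    (he : 0 < e) (heΓ : e ≤ Γ)
    (hγ0 : 0 < γ) (hγ : γ ≤ e / (3 * L))
    (T : ℕ) (hT : 1 ≤ T)
    (V : ℕ → Matrix (Fin d) (Fin d) ℝ) (δ : ℕ → ℝ)
    (hVdiag : ∀ t ≤ T, (V t).IsDiag)
    (hVpd : ∀ t ≤ T, (V t).PosDef)
    (hVe : ∀ t ≤ T, (V t - e • (1 : Matrix (Fin d) (Fin d) ℝ)).PosSemidef)
    (hVΓ : ∀ t ≤ T, (Γ • (1 : Matrix (Fin d) (Fin d) ℝ) - V t).PosSemidef)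
    (hδ : ∀ t, 1 ≤ t → t ≤ T → 0 ≤ δ t)
    (hVgrow : ∀ t < T, ((1 + δ (t + 1)) • V t - V (t + 1)).PosSemidef)
    (z zh : ℕ → EuclideanSpace ℝ (Fin d))
    (hzh : ∀ t < T, zh t = z t - γ • (Matrix.toEuclideanLin (V t)⁻¹) (F (z t)))
    (hz : ∀ t < T, z (t + 1) = z t - γ • (Matrix.toEuclideanLin (V t)⁻¹) (F (zh t)))
    (hzb : ∀ t ≤ T, ‖z t‖ ≤ Ω) :
    (T : ℝ)⁻¹ * ∑ t ∈ Finset.range T, ‖F (z t)‖ ^ 2 ≤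
      12 * Γ ^ 2 * Ω ^ 2 / (γ ^ 2 * T) +
        (12 * Γ ^ 2 * Ω ^ 2 / γ ^ 2) * ((T : ℝ)⁻¹ * ∑ t ∈ Finset.Icc 1 T, δ t) := by
  have hΩ0 : 0 ≤ Ω := le_trans (norm_nonneg _) hzstarΩ
  have hΓ0 : 0 < Γ := lt_of_lt_of_le he heΓ
  set v : ℕ → Fin d → ℝ := fun t i => V t i i with hvdef
  -- diagonal entry bounds
  have hve : ∀ t ≤ T, ∀ i, e ≤ v t i := by
    intro t ht i
    have h0 := psd_diag_nonneg (hVe t ht) i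
    simp only [Matrix.sub_apply, Matrix.smul_apply, Matrix.one_apply_eq, smul_eq_mul,
      mul_one] at h0
    simp only [hvdef]; linarith
  have hvΓ : ∀ t ≤ T, ∀ i, v t i ≤ Γ := by
    intro t ht i
    have h0 := psd_diag_nonneg (hVΓ t ht) i
    simp only [Matrix.sub_apply, Matrix.smul_apply, Matrix.one_apply_eq, smul_eq_mul,
      mul_one] at h0
    simp only [hvdef]; linarith
  have hvpos : ∀ t ≤ T, ∀ i, 0 < v t i := fun t ht i => lt_of_lt_of_le he (hve t ht i)
  have hvgrow : ∀ t < T, ∀ i, v (t+1) i ≤ (1 + δ (t+1)) * v t i := by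
    intro t ht i
    have h0 := psd_diag_nonneg (hVgrow t ht) i
    simp only [Matrix.sub_apply, Matrix.smul_apply, smul_eq_mul] at h0
    simp only [hvdef]; linarith
  -- inverse
  have hVinv : ∀ t ≤ T, (V t)⁻¹ = Matrix.diagonal (fun i => (v t i)⁻¹) := by
    intro t ht
    have hdg : V t = Matrix.diagonal (v t) := ((hVdiag t ht).diagonal_diag).symm
    rw [hdg, diag_inv_eq _ (fun i => (hvpos t ht i).ne')]
  -- coordinates of the iterates
  have hzh' : ∀ t < T, ∀ i, zh t i = z t i - γ * ((v t i)⁻¹ * F (z t) i) := by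
    intro t ht i
    rw [hzh t ht, hVinv t ht.le]
    simp [diag_toEuclideanLin]
  have hz' : ∀ t < T, ∀ i, z (t+1) i = z t i - γ * ((v t i)⁻¹ * F (zh t) i) := by
    intro t ht i
    rw [hz t ht, hVinv t ht.le]
    simp [diag_toEuclideanLin]
  -- energy
  set a : ℕ → ℝ := fun t => ∑ i, v t i * (z t i - zstar i)^2 with hadef
  have ha_nonneg : ∀ t ≤ T, 0 ≤ a t := fun t ht =>
    Finset.sum_nonneg fun i _ => mul_nonneg (hvpos t ht i).le (sq_nonneg _)
  have ha_bound : ∀ t ≤ T, a t ≤ 4*Γ*Ω^2 := by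
    intro t ht
    have h1 : a t ≤ Γ * ∑ i, (z t i - zstar i)^2 := by
      rw [hadef, Finset.mul_sum]
      exact Finset.sum_le_sum fun i _ =>
        mul_le_mul_of_nonneg_right (hvΓ t ht i) (sq_nonneg _)
    have h2 : ∑ i, (z t i - zstar i)^2 = ‖z t - zstar‖^2 := by
      rw [norm_sq_eq_sum']
      exact Finset.sum_congr rfl fun i _ => by simp
    have h3 : ‖z t - zstar‖ ≤ 2*Ω := by
      calc ‖z t - zstar‖ ≤ ‖z t‖ + ‖zstar‖ := norm_sub_le _ _
        _ ≤ 2*Ω := by linarith [hzb t ht, hzstarΩ]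
    have h4 : ‖z t - zstar‖^2 ≤ 4*Ω^2 := by nlinarith [norm_nonneg (z t - zstar)]
    rw [h2] at h1
    nlinarith [h1, h4, hΓ0]
  -- the per-step inequality
  have key : ∀ t < T, a (t+1) ≤ a t + δ (t+1) * (4*Γ*Ω^2)
      - (8/9)*γ^2*Γ⁻¹ * ‖F (z t)‖^2 := by
    intro t ht
    have htT : t ≤ T := ht.le
    have ht1T : t + 1 ≤ T := ht
    -- Lipschitz estimate in sum form
    have hlip : ∑ i, (F (zh t) i - F (z t) i)^2
        ≤ (e^2/9) * ∑ i, ((v t i)⁻¹ * F (z t) i)^2 := by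
      have e1 : ∑ i, (F (zh t) i - F (z t) i)^2 = ‖F (zh t) - F (z t)‖^2 := by
        rw [norm_sq_eq_sum']
        exact Finset.sum_congr rfl fun i _ => by simp
      have e2 : ‖zh t - z t‖^2 = γ^2 * ∑ i, ((v t i)⁻¹ * F (z t) i)^2 := by
        rw [norm_sq_eq_sum', Finset.mul_sum]
        refine Finset.sum_congr rfl fun i _ => ?_
        have : (zh t - z t) i = zh t i - z t i := by simp
        rw [this, hzh' t ht i]
        ring
      have e3 : ‖F (zh t) - F (z t)‖^2 ≤ L^2 * ‖zh t - z t‖^2 := by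
        have := hFlip (zh t) (z t)
        nlinarith [norm_nonneg (zh t - z t), norm_nonneg (F (zh t) - F (z t))]
      have hγL : γ * L ≤ e / 3 := by
        rw [le_div_iff₀ (by positivity : (0:ℝ) < 3*L)] at hγ
        linarith
      have e4 : L^2 * γ^2 ≤ e^2/9 := by nlinarith [mul_pos hγ0 hL]
      have e5 : 0 ≤ ∑ i, ((v t i)⁻¹ * F (z t) i)^2 :=
        Finset.sum_nonneg fun i _ => sq_nonneg _
      calc ∑ i, (F (zh t) i - F (z t) i)^2 = ‖F (zh t) - F (z t)‖^2 := e1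
        _ ≤ L^2 * ‖zh t - z t‖^2 := e3
        _ = L^2 * γ^2 * ∑ i, ((v t i)⁻¹ * F (z t) i)^2 := by rw [e2]; ring
        _ ≤ (e^2/9) * ∑ i, ((v t i)⁻¹ * F (z t) i)^2 :=
            mul_le_mul_of_nonneg_right e4 e5
    -- minty in sum form
    have hm : 0 ≤ ∑ i, F (zh t) i * ((z t i - zstar i) - γ * ((v t i)⁻¹ * F (z t) i)) := by
      have h0 := hminty (zh t)
      rw [inner_eq_sum'] at h0
      refine le_of_le_of_eq h0 (Finset.sum_congr rfl fun i _ => ?_)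
      have : (zh t - zstar) i = zh t i - zstar i := by simp
      rw [this, hzh' t ht i]
      ring
    -- one-step inequality for a fixed preconditioner
    have hstep := onestep (d := d) he heΓ hγ0 (v t) (fun i => F (z t) i)
      (fun i => F (zh t) i) (fun i => z t i - zstar i)
      (hve t htT) (hvΓ t htT) hlip hm
    -- rewrite the LHS of hstep as the energy of z (t+1) w.r.t. v t
    have hLHS : ∑ i, v t i * ((z t i - zstar i) - γ*((v t i)⁻¹ * F (zh t) i))^2
        = ∑ i, v t i * (z (t+1) i - zstar i)^2 := by
      refine Finset.sum_congr rfl fun i _ => ?_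
      rw [hz' t ht i]
      ring_nf
    have hnorm : ∑ i, (F (z t) i)^2 = ‖F (z t)‖^2 := (norm_sq_eq_sum' _).symm
    rw [hLHS, hnorm] at hstep
    -- growth of the preconditioner
    have hδ0 : 0 ≤ δ (t+1) := hδ (t+1) (Nat.succ_le_succ (Nat.zero_le t)) ht1T
    have hgrow : a (t+1) ≤ (1 + δ (t+1)) * ∑ i, v t i * (z (t+1) i - zstar i)^2 := by
      rw [hadef, Finset.mul_sum]
      refine Finset.sum_le_sum fun i _ => ?_
      have := mul_le_mul_of_nonneg_right (hvgrow t ht i) (sq_nonneg (z (t+1) i - zstar i))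
      linarith [this]
    have hKnn : 0 ≤ (8/9)*γ^2*Γ⁻¹ * ‖F (z t)‖^2 := by positivity
    have habt : a t ≤ 4*Γ*Ω^2 := ha_bound t htT
    have hQat : ∑ i, v t i * (z (t+1) i - zstar i)^2 ≤ a t := le_trans hstep (by linarith)
    have hd1 : δ (t+1) * (∑ i, v t i * (z (t+1) i - zstar i)^2) ≤ δ (t+1) * a t :=
      mul_le_mul_of_nonneg_left hQat hδ0
    have hd2 : δ (t+1) * a t ≤ δ (t+1) * (4*Γ*Ω^2) := mul_le_mul_of_nonneg_left habt hδ0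
    have hexp : (1 + δ (t+1)) * (∑ i, v t i * (z (t+1) i - zstar i)^2)
        = (∑ i, v t i * (z (t+1) i - zstar i)^2)
          + δ (t+1) * (∑ i, v t i * (z (t+1) i - zstar i)^2) := by ring
    rw [hexp] at hgrow
    linarith [hgrow, hstep, hd1, hd2]
  -- telescoping
  have tele : ∀ n ≤ T, a n + (8/9)*γ^2*Γ⁻¹ * ∑ t ∈ Finset.range n, ‖F (z t)‖^2
      ≤ a 0 + (4*Γ*Ω^2) * ∑ t ∈ Finset.range n, δ (t+1) := by
    intro n hn
    induction n with
    | zero => simp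
    | succ n ih =>
      have hn' : n ≤ T := le_of_lt hn
      have ihn := ih hn'
      have hk := key n hn
      rw [Finset.sum_range_succ, Finset.sum_range_succ]
      linarith [ihn, hk]
  have hteleT := tele T le_rfl
  -- reindex the delta sum
  have hreindex : ∑ t ∈ Finset.range T, δ (t+1) = ∑ t ∈ Finset.Icc 1 T, δ t := by
    rw [← Finset.Ico_add_one_right_eq_Icc, Finset.sum_Ico_eq_sum_range]
    simp [add_comm]
  set S := ∑ t ∈ Finset.range T, ‖F (z t)‖^2 with hSdef
  set Sδ := ∑ t ∈ Finset.Icc 1 T, δ t with hSδdef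
  have hS0 : 0 ≤ S := Finset.sum_nonneg fun i _ => by positivity
  have hSδ0 : 0 ≤ Sδ := Finset.sum_nonneg fun t htm => by
    rw [Finset.mem_Icc] at htm
    exact hδ t htm.1 htm.2
  have hKS : (8/9)*γ^2*Γ⁻¹ * S ≤ 4*Γ*Ω^2 + 4*Γ*Ω^2 * Sδ := by
    rw [hreindex] at hteleT
    have h0T : a T ≥ 0 := ha_nonneg T le_rfl
    have ha0 : a 0 ≤ 4*Γ*Ω^2 := ha_bound 0 (Nat.zero_le T)
    linarith [hteleT, h0T, ha0]
  -- final arithmetic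
  have hS : S ≤ 12*Γ^2*Ω^2/γ^2 + (12*Γ^2*Ω^2/γ^2) * Sδ := by
    have hKpos : (0:ℝ) < (8/9)*γ^2*Γ⁻¹ := by positivity
    have h1 : S = ((8/9)*γ^2*Γ⁻¹)⁻¹ * ((8/9)*γ^2*Γ⁻¹ * S) := by
      field_simp
    have h2 : ((8/9)*γ^2*Γ⁻¹)⁻¹ * ((8/9)*γ^2*Γ⁻¹ * S)
        ≤ ((8/9)*γ^2*Γ⁻¹)⁻¹ * (4*Γ*Ω^2 + 4*Γ*Ω^2 * Sδ) :=
      mul_le_mul_of_nonneg_left hKS (by positivity)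
    have h3 : ((8/9)*γ^2*Γ⁻¹)⁻¹ * (4*Γ*Ω^2 + 4*Γ*Ω^2 * Sδ)
        = (9/2)*Γ^2*Ω^2/γ^2 + ((9/2)*Γ^2*Ω^2/γ^2) * Sδ := by
      field_simp
      ring
    have h4 : (9/2)*Γ^2*Ω^2/γ^2 + ((9/2)*Γ^2*Ω^2/γ^2) * Sδ
        ≤ 12*Γ^2*Ω^2/γ^2 + (12*Γ^2*Ω^2/γ^2) * Sδ := by
      have hc : (9/2)*Γ^2*Ω^2/γ^2 ≤ 12*Γ^2*Ω^2/γ^2 := by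
        apply div_le_div_of_nonneg_right ?_ (by positivity)
        nlinarith [sq_nonneg Γ, sq_nonneg Ω, hΓ0, hΩ0]
      have hc2 : ((9/2)*Γ^2*Ω^2/γ^2) * Sδ ≤ (12*Γ^2*Ω^2/γ^2) * Sδ :=
        mul_le_mul_of_nonneg_right hc hSδ0
      linarith
    calc S = ((8/9)*γ^2*Γ⁻¹)⁻¹ * ((8/9)*γ^2*Γ⁻¹ * S) := h1
      _ ≤ ((8/9)*γ^2*Γ⁻¹)⁻¹ * (4*Γ*Ω^2 + 4*Γ*Ω^2 * Sδ) := h2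
      _ = (9/2)*Γ^2*Ω^2/γ^2 + ((9/2)*Γ^2*Ω^2/γ^2) * Sδ := h3
      _ ≤ 12*Γ^2*Ω^2/γ^2 + (12*Γ^2*Ω^2/γ^2) * Sδ := h4
  have hT0 : (0:ℝ) < T := by exact_mod_cast Nat.lt_of_lt_of_le Nat.zero_lt_one hT
  calc (T:ℝ)⁻¹ * S ≤ (T:ℝ)⁻¹ * (12*Γ^2*Ω^2/γ^2 + (12*Γ^2*Ω^2/γ^2) * Sδ) :=
        mul_le_mul_of_nonneg_left hS (inv_nonneg.2 hT0.le)
    _ = 12 * Γ ^ 2 * Ω ^ 2 / (γ ^ 2 * T) + (12 * Γ ^ 2 * Ω ^ 2 / γ ^ 2) * ((T : ℝ)⁻¹ * Sδ) := by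
        rw [show 12 * Γ ^ 2 * Ω ^ 2 / (γ ^ 2 * (T:ℝ)) = (T:ℝ)⁻¹ * (12 * Γ ^ 2 * Ω ^ 2 / γ ^ 2) by
          rw [← div_div, div_eq_mul_inv _ (T:ℝ), mul_comm]]
        ring
end
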